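/- arXiv:2205.08913 — 11 statements merged into one kernel-verified Lean document; each statement's English description precedes it below -/
import Mathlib

section
/- Let I ≥ 2, W₀ > 0, let U : ℝ^I → ℝ be continuous, concave and monotonically increasing, and let V : ℝ^I → ℝ be continuous, monotonically increasing, strictly concave for non-equivalent wealth vectors, and satisfy the recession condition. Let x, y ∈ ℝ^I with U(y) ≥ U(W₀·e). Then the optimization problem maximize V(x + z) over z ∈ ℝ^I subject to U(y − z) ≥ U(W₀·e) admits an optimal solution, and this optimal solution is unique. -/
/-!
The trades `z` that are acceptable (`U (W0 • 1) ≤ U (y - z)`) and improving (`V x ≤ V (x + z)`)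
form a closed convex set. If it were unbounded it would contain a ray `a + t • d` with `d ≠ 0`.
A concave function bounded below along one ray is nondecreasing along every parallel ray, so the
recession condition forces `d ≥ 0`; but then `U` strictly drops from `y - a` to `y - a - d`, and
concavity makes it unbounded below along the ray, contradicting acceptability. Hence the set is
compact and `V (x + ·)` attains its maximum on the acceptable trades. Two distinct maximizers
would have a strictly better midpoint: by strict concavity if the wealth vectors are not
equivalent, by strict monotonicity if they differ by a multiple of `1`. Strict concavity off
equivalent pairs and continuity make `V` concave, since `I ≥ 2` lets one perturb an equivalent
pair into non-equivalent ones.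
-/

open Set Filter Topology

section ConcaveRay

variable {E : Type*} [AddCommGroup E] [Module ℝ E] {f : E → ℝ}

theorem ConcaveOn.le_apply_add_smul_of_bddBelow (hf : ConcaveOn ℝ univ f) {x d : E} {c : ℝ}
    (hc : ∀ t : ℝ, 0 ≤ t → c ≤ f (x + t • d)) {t : ℝ} (ht : 0 ≤ t) : f x ≤ f (x + t • d) := by
  rcases ht.eq_or_lt with rfl | ht
  · simp
  -- `x + t • d = (1 - s) • x + s • (x + (t / s) • d)`, so the drop `f x - f (x + t • d)`
  -- is at most `s * (f x - c)` for every `s ∈ (0, 1]`.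
  have hdrop : ∀ s : ℝ, 0 < s → s ≤ 1 → f x - f (x + t • d) ≤ s * (f x - c) := by
    intro s hs hs1
    have hcomb : (1 - s) • x + s • (x + (t / s) • d) = x + t • d := by
      rw [smul_add, smul_smul, mul_div_cancel₀ t hs.ne']
      module
    have hconc := hf.2 (mem_univ x) (mem_univ (x + (t / s) • d)) (sub_nonneg.2 hs1) hs.le
      (sub_add_cancel 1 s)
    rw [hcomb, smul_eq_mul, smul_eq_mul] at hconc
    nlinarith [hc (t / s) (div_nonneg ht.le hs.le)]
  have hlim : Tendsto (fun s : ℝ => s * (f x - c)) (𝓝[>] 0) (𝓝 0) := by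
    simpa using tendsto_nhdsWithin_of_tendsto_nhds ((continuous_mul_const (f x - c)).tendsto 0)
  have hev : ∀ᶠ s in 𝓝[>] (0 : ℝ), f x - f (x + t • d) ≤ s * (f x - c) := by
    filter_upwards [Ioc_mem_nhdsGT zero_lt_one] with s hs using hdrop s hs.1 hs.2
  linarith [ge_of_tendsto hlim hev]

theorem ConcaveOn.bddBelow_parallel_ray (hf : ConcaveOn ℝ univ f) {x d : E} {c : ℝ}
    (hc : ∀ t : ℝ, 0 ≤ t → c ≤ f (x + t • d)) (x' : E) {t : ℝ} (ht : 0 ≤ t) :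
    (c + f ((2 : ℝ) • x' - x)) / 2 ≤ f (x' + t • d) := by
  have hmid : (2⁻¹ : ℝ) • (x + (2 * t) • d) + (2⁻¹ : ℝ) • ((2 : ℝ) • x' - x) = x' + t • d := by
    module
  have hconc := hf.2 (mem_univ (x + (2 * t) • d)) (mem_univ ((2 : ℝ) • x' - x))
    (by norm_num : (0 : ℝ) ≤ 2⁻¹) (by norm_num : (0 : ℝ) ≤ 2⁻¹) (by norm_num)
  rw [hmid, smul_eq_mul, smul_eq_mul] at hconc
  linarith [hc (2 * t) (by positivity)]

theorem ConcaveOn.le_apply_add_smul_of_bddBelow_ray (hf : ConcaveOn ℝ univ f) {x d : E} {c : ℝ}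
    (hc : ∀ t : ℝ, 0 ≤ t → c ≤ f (x + t • d)) (x' : E) {t : ℝ} (ht : 0 ≤ t) :
    f x' ≤ f (x' + t • d) :=
  hf.le_apply_add_smul_of_bddBelow (fun _ hs => hf.bddBelow_parallel_ray hc x' hs) ht

theorem ConcaveOn.convex_setOf_le_apply_sub (hf : ConcaveOn ℝ univ f) (c : ℝ) (y : E) :
    Convex ℝ {z | c ≤ f (y - z)} := by
  simpa using (hf.comp_affineMap (AffineEquiv.constVSub ℝ y).toAffineMap).convex_ge c

end ConcaveRay

theorem exists_ray_subset_of_not_isBounded {E : Type*} [NormedAddCommGroup E] [NormedSpace ℝ E]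
    [ProperSpace E] {C : Set E} (hCc : IsClosed C) (hCv : Convex ℝ C)
    (hCb : ¬ Bornology.IsBounded C) {a : E} (ha : a ∈ C) :
    ∃ d : E, d ≠ 0 ∧ ∀ t : ℝ, 0 ≤ t → a + t • d ∈ C := by
  have hfar : ∀ n : ℕ, ∃ z ∈ C, (n : ℝ) < ‖z - a‖ := by
    intro n
    by_contra! h
    exact hCb ((Metric.isBounded_closedBall (x := a) (r := n)).subset
      fun z hz => by simpa [dist_eq_norm] using h z hz)
  choose z hzC hzn using hfar
  have hpos : ∀ n, 0 < ‖z n - a‖ := fun n => (Nat.cast_nonneg n).trans_lt (hzn n)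
  set u : ℕ → E := fun n => ‖z n - a‖⁻¹ • (z n - a)
  have hu : ∀ n, u n ∈ Metric.sphere (0 : E) 1 := fun n => by
    simp [u, norm_smul, (hpos n).ne']
  obtain ⟨d, hd, φ, hφ, hlim⟩ := (isCompact_sphere (0 : E) 1).tendsto_subseq hu
  refine ⟨d, ne_zero_of_mem_unit_sphere ⟨d, hd⟩, fun t ht => ?_⟩
  refine hCc.mem_of_tendsto ((tendsto_const_nhds (x := a)).add (hlim.const_smul t)) ?_
  filter_upwards [eventually_ge_atTop ⌈t⌉₊] with n hn
  have htn : t ≤ ‖z (φ n) - a‖ :=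
    calc t ≤ ⌈t⌉₊ := Nat.le_ceil t
      _ ≤ n := by exact_mod_cast hn
      _ ≤ φ n := by exact_mod_cast hφ.le_apply
      _ ≤ ‖z (φ n) - a‖ := (hzn (φ n)).le
  have hmem := hCv.add_smul_sub_mem ha (hzC (φ n))
    ⟨div_nonneg ht (hpos (φ n)).le, (div_le_one (hpos (φ n))).2 htn⟩
  simpa [u, smul_smul, div_eq_mul_inv] using hmem

section WealthVectors

variable {ι : Type*} {V : (ι → ℝ) → ℝ}

theorem concaveOn_univ_of_lt_of_not_equiv [Nontrivial ι] (hV : Continuous V)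
    (hVs : ∀ x y : ι → ℝ, (¬ ∃ t : ℝ, y = x + t • (1 : ι → ℝ)) →
      ∀ a : ℝ, 0 < a → a < 1 → a * V x + (1 - a) * V y < V (a • x + (1 - a) • y)) :
    ConcaveOn ℝ univ V := by
  classical
  refine concaveOn_iff_forall_pos.2 ⟨convex_univ, fun p _ q _ a b ha hb hab => ?_⟩
  obtain rfl : b = 1 - a := by linarith
  have ha1 : a < 1 := by linarith
  by_cases hequiv : ∃ t : ℝ, q = p + t • (1 : ι → ℝ)
  swap
  · exact (hVs p q hequiv a ha ha1).le
  -- Equivalent wealth vectors are limits of non-equivalent ones: move one coordinate only.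
  obtain ⟨s, rfl⟩ := hequiv
  obtain ⟨i, j, hij⟩ := exists_pair_ne ι
  set q : ℝ → ι → ℝ := fun ε => p + s • (1 : ι → ℝ) + ε • Pi.single i 1
  have hne : ∀ ε ≠ 0, ¬ ∃ t : ℝ, q ε = p + t • (1 : ι → ℝ) := by
    rintro ε hε ⟨t, ht⟩
    have hi := congrFun ht i
    have hj := congrFun ht j
    simp [q, hij.symm] at hi hj
    exact hε (by linarith)
  have hlim : ∀ g : ℝ → ℝ, Continuous g → Tendsto g (𝓝[≠] 0) (𝓝 (g 0)) := fun g hg =>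
    tendsto_nhdsWithin_of_tendsto_nhds (hg.tendsto 0)
  have key := le_of_tendsto_of_tendsto
    (hlim (fun ε => a * V p + (1 - a) * V (q ε)) (by fun_prop))
    (hlim (fun ε => V (a • p + (1 - a) • q ε)) (by fun_prop))
    (eventually_nhdsWithin_of_forall fun ε hε => (hVs p (q ε) (hne ε hε) a ha ha1).le)
  simpa [q] using key

theorem min_lt_apply_midpoint [Nonempty ι] (hVstrict : ∀ x y : ι → ℝ, x ≤ y → x ≠ y → V x < V y)
    (hVs : ∀ x y : ι → ℝ, (¬ ∃ t : ℝ, y = x + t • (1 : ι → ℝ)) →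
      ∀ a : ℝ, 0 < a → a < 1 → a * V x + (1 - a) * V y < V (a • x + (1 - a) • y))
    {p q : ι → ℝ} (hpq : p ≠ q) : min (V p) (V q) < V ((2⁻¹ : ℝ) • (p + q)) := by
  by_cases hequiv : ∃ t : ℝ, q = p + t • (1 : ι → ℝ)
  · obtain ⟨t, rfl⟩ := hequiv
    have hmid : (2⁻¹ : ℝ) • (p + (p + t • 1)) = p + (t / 2) • (1 : ι → ℝ) := by module
    have hshift : ∀ r : ℝ, 0 < r → ∀ w : ι → ℝ, V w < V (w + r • 1) := fun r hr w =>
      hVstrict _ _ (fun _ => by simp [hr.le]) fun h => by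
        simpa [hr.ne'] using congrFun h (Classical.arbitrary ι)
    rw [hmid]
    rcases lt_trichotomy t 0 with ht | rfl | ht
    · have h := hshift (-(t / 2)) (by linarith) (p + t • 1)
      rw [show p + t • 1 + (-(t / 2)) • 1 = p + (t / 2) • (1 : ι → ℝ) by module] at h
      exact (min_le_right _ _).trans_lt h
    · simp at hpq
    · exact (min_le_left _ _).trans_lt (hshift _ (half_pos ht) p)
  · have h := hVs p q hequiv 2⁻¹ (by norm_num) (by norm_num)
    rw [show (1 : ℝ) - 2⁻¹ = 2⁻¹ by norm_num, ← smul_add] at h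
    linarith [min_le_left (V p) (V q), min_le_right (V p) (V q)]

end WealthVectors

theorem exists_isMaxOn_of_isBounded_superlevel {E : Type*} [PseudoMetricSpace E] [ProperSpace E]
    {F : Set E} {g : E → ℝ} (hg : ContinuousOn g F) (hF : IsClosed F) {z₀ : E} (hz₀ : z₀ ∈ F)
    (hb : Bornology.IsBounded {z ∈ F | g z₀ ≤ g z}) : ∃ z ∈ F, IsMaxOn g F z := by
  refine hg.exists_isMaxOn' hF hz₀ (mem_inf_principal.2 ?_)
  filter_upwards [hb.isCompact_closure.compl_mem_cocompact] with z hz hzF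
  by_contra! h
  exact hz (subset_closure ⟨hzF, h.le⟩)

theorem isBounded_acceptable_improving {ι : Type*} [Fintype ι] {U V : (ι → ℝ) → ℝ}
    (hUcont : Continuous U) (hUconc : ConcaveOn ℝ univ U)
    (hUstrict : ∀ x y : ι → ℝ, x ≤ y → x ≠ y → U x < U y)
    (hVcont : Continuous V) (hVconc : ConcaveOn ℝ univ V)
    (hVrecc : ∀ d : ι → ℝ, (∀ (x : ι → ℝ) (t : ℝ), 0 ≤ t → V x ≤ V (x + t • d)) → 0 ≤ d)
    (β : ℝ) (x y : ι → ℝ) :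
    Bornology.IsBounded ({z | β ≤ U (y - z)} ∩ {z | V x ≤ V (x + z)}) := by
  set S := {z | β ≤ U (y - z)} ∩ {z | V x ≤ V (x + z)}
  have hSc : IsClosed S :=
    (isClosed_le continuous_const (by fun_prop)).inter (isClosed_le continuous_const (by fun_prop))
  have hSv : Convex ℝ S := by
    have hV := (hVconc.translate_right x).convex_ge (V x)
    simpa [S] using (hUconc.convex_setOf_le_apply_sub β y).inter hV
  by_contra hSb
  obtain ⟨a, haS⟩ : S.Nonempty :=
    nonempty_iff_ne_empty.2 fun h => hSb (h ▸ Bornology.isBounded_empty)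
  obtain ⟨d, hd, hray⟩ := exists_ray_subset_of_not_isBounded hSc hSv hSb haS
  have hd0 : 0 ≤ d := hVrecc d fun x' t ht =>
    hVconc.le_apply_add_smul_of_bddBelow_ray (x := x + a) (c := V x)
      (fun s hs => by simpa [add_assoc] using (hray s hs).2) x' ht
  have hUdrop : U (y - a - d) < U (y - a) :=
    hUstrict _ _ (sub_le_self _ hd0) (by simpa using hd)
  have hUle : U (y - a) ≤ U (y - a + (1 : ℝ) • -d) :=
    hUconc.le_apply_add_smul_of_bddBelow (c := β)
      (fun s hs => by rw [show y - a + s • -d = y - (a + s • d) by module]; exact (hray s hs).1)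
      zero_le_one
  rw [one_smul, ← sub_eq_add_neg] at hUle
  exact hUle.not_gt hUdrop

theorem stmt_1_general (I : ℕ) (hI : 2 ≤ I) (W0 : ℝ)
    (U V : (Fin I → ℝ) → ℝ)
    (hUcont : Continuous U) (hUconc : ConcaveOn ℝ Set.univ U)
    (hUstrict : ∀ x y : Fin I → ℝ, x ≤ y → x ≠ y → U x < U y)
    (hVcont : Continuous V)
    (hVstrict : ∀ x y : Fin I → ℝ, x ≤ y → x ≠ y → V x < V y)
    (hVsconc : ∀ x y : Fin I → ℝ, (¬ ∃ t : ℝ, y = x + t • (1 : Fin I → ℝ)) →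
      ∀ a : ℝ, 0 < a → a < 1 → a * V x + (1 - a) * V y < V (a • x + (1 - a) • y))
    (hVrecc : ∀ d : Fin I → ℝ,
      (∀ (x : Fin I → ℝ) (t : ℝ), 0 ≤ t → V x ≤ V (x + t • d)) → 0 ≤ d)
    (x y : Fin I → ℝ) (hy : U (W0 • (1 : Fin I → ℝ)) ≤ U y) :
    ∃! z : Fin I → ℝ, U (W0 • (1 : Fin I → ℝ)) ≤ U (y - z) ∧
      ∀ z' : Fin I → ℝ, U (W0 • (1 : Fin I → ℝ)) ≤ U (y - z') → V (x + z') ≤ V (x + z) := by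
  have : Nontrivial (Fin I) := Fin.nontrivial_iff_two_le.2 hI
  set β := U (W0 • (1 : Fin I → ℝ))
  set F := {z : Fin I → ℝ | β ≤ U (y - z)}
  have hFc : IsClosed F := isClosed_le continuous_const (by fun_prop)
  have hFv : Convex ℝ F := hUconc.convex_setOf_le_apply_sub β y
  have hVconc := concaveOn_univ_of_lt_of_not_equiv hVcont hVsconc
  have hbdd := isBounded_acceptable_improving hUcont hUconc hUstrict hVcont hVconc hVrecc β x y
  obtain ⟨z, hzF, hzmax⟩ := exists_isMaxOn_of_isBounded_superlevel (g := fun z => V (x + z))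
    (by fun_prop) hFc (z₀ := 0) (by simpa [F] using hy) (by simpa [F, Set.ofPred_and] using hbdd)
  refine ⟨z, ⟨hzF, fun z' hz' => hzmax hz'⟩, fun z' ⟨hz'F, hz'max⟩ => ?_⟩
  by_contra hne
  have hmidF : (2⁻¹ : ℝ) • (z' + z) ∈ F := by
    simpa [smul_add] using hFv hz'F hzF (by norm_num : (0 : ℝ) ≤ 2⁻¹) (by norm_num : (0 : ℝ) ≤ 2⁻¹)
      (by norm_num)
  have hlt := min_lt_apply_midpoint hVstrict hVsconc (p := x + z') (q := x + z) (by simpa using hne)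
  rw [show (2⁻¹ : ℝ) • (x + z' + (x + z)) = x + (2⁻¹ : ℝ) • (z' + z) by module] at hlt
  exact hlt.not_ge (le_min (hz'max _ hmidF) (hzmax hmidF))

/-- The one-round trading problem `P_j` admits a unique optimal solution. -/
theorem stmt_1 (I : ℕ) (hI : 2 ≤ I) (W0 : ℝ) (hW0 : 0 < W0)
    (U V : (Fin I → ℝ) → ℝ)
    (hUcont : Continuous U) (hUconc : ConcaveOn ℝ Set.univ U)
    (hUmono : ∀ x y : Fin I → ℝ, x ≤ y → U x ≤ U y)
    (hUstrict : ∀ x y : Fin I → ℝ, x ≤ y → x ≠ y → U x < U y)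
    (hVcont : Continuous V)
    (hVmono : ∀ x y : Fin I → ℝ, x ≤ y → V x ≤ V y)
    (hVstrict : ∀ x y : Fin I → ℝ, x ≤ y → x ≠ y → V x < V y)
    (hVsconc : ∀ x y : Fin I → ℝ, (¬ ∃ t : ℝ, y = x + t • (1 : Fin I → ℝ)) →
      ∀ a : ℝ, 0 < a → a < 1 → a * V x + (1 - a) * V y < V (a • x + (1 - a) • y))
    (hVrecc : ∀ d : Fin I → ℝ,
      (∀ (x : Fin I → ℝ) (t : ℝ), 0 ≤ t → V x ≤ V (x + t • d)) → 0 ≤ d)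
    (x y : Fin I → ℝ) (hy : U (W0 • (1 : Fin I → ℝ)) ≤ U y) :
    ∃! z : Fin I → ℝ, U (W0 • (1 : Fin I → ℝ)) ≤ U (y - z) ∧
      ∀ z' : Fin I → ℝ, U (W0 • (1 : Fin I → ℝ)) ≤ U (y - z') → V (x + z') ≤ V (x + z) :=
  stmt_1_general I hI W0 U V hUcont hUconc hUstrict hVcont hVstrict hVsconc hVrecc x y hy
end

section
/- Let I ≥ 2 and J ≥ 1, W₀ > 0, w₀ᵃˡˡ ∈ ℝ. Let U : ℝ^I → ℝ be continuous, concave and monotonically increasing, and for each j = 1,…,J let V_j : ℝ^I → ℝ be continuous, monotonically increasing, and strictly concave for non-equivalent wealth vectors. Suppose (x̂_1,…,x̂_J) is a Pareto optimal allocation, and suppose (x̄_1,…,x̄_J) satisfies U(w₀ᵃˡˡ·e − Σ_j x̄_j) ≥ U(W₀·e) and V_j(x̄_j) = V_j(x̂_j) for every j. Then x̄_j = x̂_j for every j; that is, a Pareto optimal allocation is uniquely determined by its vector of utility levels. -/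
/-- A Pareto optimal allocation is uniquely determined by its vector of
utility levels. -/
theorem stmt_5 (I J : ℕ) (hI : 2 ≤ I) (hJ : 1 ≤ J)
    (W0 w0all : ℝ) (hW0 : 0 < W0)
    (U : (Fin I → ℝ) → ℝ)
    (hUcont : Continuous U) (hUconc : ConcaveOn ℝ Set.univ U)
    (hUmono : ∀ x y : Fin I → ℝ, x ≤ y → U x ≤ U y)
    (hUstrict : ∀ x y : Fin I → ℝ, x ≤ y → x ≠ y → U x < U y)
    (V : Fin J → (Fin I → ℝ) → ℝ)
    (hVcont : ∀ j, Continuous (V j))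
    (hVmono : ∀ j (x y : Fin I → ℝ), x ≤ y → V j x ≤ V j y)
    (hVstrict : ∀ j (x y : Fin I → ℝ), x ≤ y → x ≠ y → V j x < V j y)
    (hVsconc : ∀ j (x y : Fin I → ℝ), (¬ ∃ t : ℝ, y = x + t • (1 : Fin I → ℝ)) →
      ∀ a : ℝ, 0 < a → a < 1 → a * V j x + (1 - a) * V j y < V j (a • x + (1 - a) • y))
    (xhat xbar : Fin J → Fin I → ℝ)
    -- `xhat` is a Pareto optimal allocation
    (hfeas : U (W0 • (1 : Fin I → ℝ)) ≤ U (w0all • (1 : Fin I → ℝ) - ∑ j, xhat j))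
    (hpareto : ¬ ∃ x' : Fin J → Fin I → ℝ,
      U (W0 • (1 : Fin I → ℝ)) ≤ U (w0all • (1 : Fin I → ℝ) - ∑ j, x' j) ∧
      (∀ j, V j (xhat j) ≤ V j (x' j)) ∧ (∃ j, V j (xhat j) < V j (x' j)))
    -- `xbar` is feasible and achieves the same utility levels
    (hbarfeas : U (W0 • (1 : Fin I → ℝ)) ≤ U (w0all • (1 : Fin I → ℝ) - ∑ j, xbar j))
    (hbarval : ∀ j, V j (xbar j) = V j (xhat j)) :
    ∀ j, xbar j = xhat j := by

  have hIpos : 0 < I := by omega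
  -- Step 1: for each j, either xbar j = xhat j or they are non-equivalent
  have key : ∀ j, xbar j ≠ xhat j → ¬ ∃ t : ℝ, xbar j = xhat j + t • (1 : Fin I → ℝ) := by
    intro j hne ⟨t, ht⟩
    rcases lt_trichotomy t 0 with htneg | htzero | htpos
    · have hle : xbar j ≤ xhat j := by
        intro i; simp [ht, Pi.add_apply]; linarith
      have := hVstrict j (xbar j) (xhat j) hle hne
      linarith [hbarval j]
    · apply hne; rw [ht, htzero]; simp
    · have hle : xhat j ≤ xbar j := by
        intro i; simp [ht, Pi.add_apply]; linarith
      have hne' : xhat j ≠ xbar j := fun h => hne h.symm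
      have := hVstrict j (xhat j) (xbar j) hle hne'
      linarith [hbarval j]
  by_contra hcon
  push_neg at hcon
  obtain ⟨j0, hj0⟩ := hcon
  -- midpoint allocation
  set x' : Fin J → Fin I → ℝ := fun j => (1/2 : ℝ) • xhat j + (1/2 : ℝ) • xbar j with hx'
  apply hpareto
  refine ⟨x', ?_, ?_, ?_⟩
  · have hsum : w0all • (1 : Fin I → ℝ) - ∑ j, x' j
        = (1/2 : ℝ) • (w0all • (1 : Fin I → ℝ) - ∑ j, xhat j)
          + (1/2 : ℝ) • (w0all • (1 : Fin I → ℝ) - ∑ j, xbar j) := by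
      funext i
      simp only [hx', Pi.sub_apply, Pi.add_apply, Pi.smul_apply, Pi.one_apply,
        smul_eq_mul, Finset.sum_apply]
      rw [Finset.sum_add_distrib, ← Finset.mul_sum, ← Finset.mul_sum]
      ring
    rw [hsum]
    have hc := hUconc.2 (Set.mem_univ (w0all • (1 : Fin I → ℝ) - ∑ j, xhat j))
      (Set.mem_univ (w0all • (1 : Fin I → ℝ) - ∑ j, xbar j))
      (by norm_num : (0:ℝ) ≤ 1/2) (by norm_num : (0:ℝ) ≤ 1/2) (by norm_num)
    have : U (W0 • (1 : Fin I → ℝ)) ≤ (1/2 : ℝ) * U (w0all • (1 : Fin I → ℝ) - ∑ j, xhat j)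
        + (1/2 : ℝ) * U (w0all • (1 : Fin I → ℝ) - ∑ j, xbar j) := by
      nlinarith
    calc U (W0 • (1 : Fin I → ℝ)) ≤ _ := this
      _ ≤ _ := by simpa using hc
  · intro j
    by_cases h : xbar j = xhat j
    · have : x' j = xhat j := by
        funext i; simp [hx', h]; ring
      rw [this]
    · have hsc := hVsconc j (xhat j) (xbar j) (key j h) (1/2) (by norm_num) (by norm_num)
      have : (1 - 1/2 : ℝ) = 1/2 := by norm_num
      rw [this] at hsc
      rw [hbarval j] at hsc
      have := hsc
      linarith
  · refine ⟨j0, ?_⟩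
    have hsc := hVsconc j0 (xhat j0) (xbar j0) (key j0 hj0) (1/2) (by norm_num) (by norm_num)
    have h2 : (1 - 1/2 : ℝ) = 1/2 := by norm_num
    rw [h2] at hsc
    rw [hbarval j0] at hsc
    linarith
end

section
/- Let I ≥ 2, let α > 0, β > 0, C > 0, and let π̂_1,…,π̂_I > 0 and θ̂_1,…,θ̂_I > 0. Consider the problem: maximize −(1/α)·Σ_{i=1}^I π̂_i·e^{−α z_i} over z ∈ ℝ^I subject to Σ_{i=1}^I θ̂_i·e^{β z_i} ≤ C. This problem has a unique optimal solution z*, given by z*_i = (1/(α+β))·ln(π̂_i/(ζ·θ̂_i)) for all i, where ζ = ( Σ_{k=1}^I θ̂_k^{α/(α+β)}·π̂_k^{β/(α+β)} / C )^{(α+β)/β}. Moreover, the post-trade normalized vector p'_i = θ̂_i·e^{β z*_i} / Σ_{k=1}^I θ̂_k·e^{β z*_k} satisfies p'_i = θ̂_i^{α/(α+β)}·π̂_i^{β/(α+β)} / Σ_{k=1}^I θ̂_k^{α/(α+β)}·π̂_k^{β/(α+β)} for all i. -/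
/-!
The formula for `z*` solves the first-order condition `π_i e^{-α z_i} = ζ θ_i e^{β z_i}` of the
Lagrangian with multiplier `ζ`, and `ζ` is chosen so that the constraint binds. For such a point,
`β π_i e^{-α x} + α ζ θ_i e^{β x}` equals `π_i e^{-α z*_i}` times `β e^{-α d} + α e^{β d}` with
`d = x - z*_i`, and `e^y ≥ 1 + y` bounds the latter below by `α + β`, strictly when `d ≠ 0`.
Summing over `i` and using the constraint gives optimality and uniqueness. Finally
`θ_i e^{β z*_i} = C θ_i^{α/(α+β)} π_i^{β/(α+β)} / Σ_k θ_k^{α/(α+β)} π_k^{β/(α+β)}`,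
which gives the post-trade price.
-/

open Finset

section

open Real

variable {ι : Type*} [Fintype ι] {α β : ℝ}

theorem add_le_mul_exp_add_mul_exp (hα : 0 ≤ α) (hβ : 0 ≤ β) (d : ℝ) :
    β + α ≤ β * exp (-(α * d)) + α * exp (β * d) := by
  nlinarith [add_one_le_exp (-(α * d)), add_one_le_exp (β * d)]

theorem add_lt_mul_exp_add_mul_exp (hα : 0 < α) (hβ : 0 < β) {d : ℝ} (hd : d ≠ 0) :
    β + α < β * exp (-(α * d)) + α * exp (β * d) := by
  nlinarith [add_one_lt_exp (neg_ne_zero.2 (mul_ne_zero hα.ne' hd)),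
    add_one_lt_exp (mul_ne_zero hβ.ne' hd)]

theorem lagrangian_eq_of_foc {p c x₀ : ℝ} (hx₀ : p * exp (-(α * x₀)) = c * exp (β * x₀))
    (x : ℝ) :
    β * (p * exp (-(α * x))) + α * (c * exp (β * x)) =
      p * exp (-(α * x₀)) * (β * exp (-(α * (x - x₀))) + α * exp (β * (x - x₀))) := by
  have hp : p * exp (-(α * x)) = p * exp (-(α * x₀)) * exp (-(α * (x - x₀))) := by
    rw [mul_assoc, ← exp_add]; ring_nf
  have hc : c * exp (β * x) = p * exp (-(α * x₀)) * exp (β * (x - x₀)) := by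
    rw [hx₀, mul_assoc, ← exp_add]; ring_nf
  rw [hp, hc]; ring

theorem lagrangian_le_of_foc {p c x₀ : ℝ} (hα : 0 ≤ α) (hβ : 0 ≤ β) (hp : 0 ≤ p)
    (hx₀ : p * exp (-(α * x₀)) = c * exp (β * x₀)) (x : ℝ) :
    β * (p * exp (-(α * x₀))) + α * (c * exp (β * x₀)) ≤
      β * (p * exp (-(α * x))) + α * (c * exp (β * x)) := by
  rw [lagrangian_eq_of_foc hx₀ x, ← hx₀, ← add_mul, mul_comm]
  exact mul_le_mul_of_nonneg_left (add_le_mul_exp_add_mul_exp hα hβ _) (by positivity)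

theorem lagrangian_lt_of_foc {p c x₀ x : ℝ} (hα : 0 < α) (hβ : 0 < β) (hp : 0 < p)
    (hx₀ : p * exp (-(α * x₀)) = c * exp (β * x₀)) (hx : x ≠ x₀) :
    β * (p * exp (-(α * x₀))) + α * (c * exp (β * x₀)) <
      β * (p * exp (-(α * x))) + α * (c * exp (β * x)) := by
  rw [lagrangian_eq_of_foc hx₀ x, ← hx₀, ← add_mul, mul_comm]
  exact mul_lt_mul_of_pos_left (add_lt_mul_exp_add_mul_exp hα hβ (sub_ne_zero.2 hx))
    (by positivity)

variable {lam C : ℝ} {p q z₀ : ι → ℝ}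

theorem sum_mul_exp_neg_le_of_foc (hα : 0 ≤ α) (hβ : 0 < β) (hp : ∀ i, 0 ≤ p i)
    (hlam : 0 ≤ lam) (hfoc : ∀ i, p i * exp (-(α * z₀ i)) = lam * q i * exp (β * z₀ i))
    (hz₀ : ∑ i, q i * exp (β * z₀ i) = C) {z : ι → ℝ} (hz : ∑ i, q i * exp (β * z i) ≤ C) :
    ∑ i, p i * exp (-(α * z₀ i)) ≤ ∑ i, p i * exp (-(α * z i)) := by
  have hL : β * ∑ i, p i * exp (-(α * z₀ i)) + α * (lam * ∑ i, q i * exp (β * z₀ i)) ≤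
      β * ∑ i, p i * exp (-(α * z i)) + α * (lam * ∑ i, q i * exp (β * z i)) := by
    simpa only [mul_sum, ← sum_add_distrib, mul_assoc] using
      sum_le_sum fun i _ => lagrangian_le_of_foc hα hβ.le (hp i) (hfoc i) (z i)
  have : α * (lam * ∑ i, q i * exp (β * z i)) ≤ α * (lam * C) := by gcongr
  rw [hz₀] at hL
  nlinarith

theorem sum_mul_exp_neg_lt_of_foc (hα : 0 < α) (hβ : 0 < β) (hp : ∀ i, 0 < p i)
    (hlam : 0 ≤ lam) (hfoc : ∀ i, p i * exp (-(α * z₀ i)) = lam * q i * exp (β * z₀ i))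
    (hz₀ : ∑ i, q i * exp (β * z₀ i) = C) {z : ι → ℝ} (hz : ∑ i, q i * exp (β * z i) ≤ C)
    (hne : z ≠ z₀) :
    ∑ i, p i * exp (-(α * z₀ i)) < ∑ i, p i * exp (-(α * z i)) := by
  obtain ⟨j, hj⟩ := Function.ne_iff.1 hne
  have hL : β * ∑ i, p i * exp (-(α * z₀ i)) + α * (lam * ∑ i, q i * exp (β * z₀ i)) <
      β * ∑ i, p i * exp (-(α * z i)) + α * (lam * ∑ i, q i * exp (β * z i)) := by
    simpa only [mul_sum, ← sum_add_distrib, mul_assoc] using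
      sum_lt_sum (fun i _ => lagrangian_le_of_foc hα.le hβ.le (hp i).le (hfoc i) (z i))
        ⟨j, mem_univ j, lagrangian_lt_of_foc hα hβ (hp j) (hfoc j) hj⟩
  have : α * (lam * ∑ i, q i * exp (β * z i)) ≤ α * (lam * C) := by gcongr
  rw [hz₀] at hL
  nlinarith

theorem mul_exp_neg_eq_mul_exp_of_eq_log {p c : ℝ} (hp : 0 < p) (hc : 0 < c)
    (hαβ : α + β ≠ 0) :
    p * exp (-(α * ((1 / (α + β)) * log (p / c)))) =
      c * exp (β * ((1 / (α + β)) * log (p / c))) := by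
  set x := (1 / (α + β)) * log (p / c)
  have hx : exp ((α + β) * x) = p / c := by
    rw [show (α + β) * x = log (p / c) by simp only [x]; field_simp]; exact exp_log (by positivity)
  calc p * exp (-(α * x)) = c * exp ((α + β) * x) * exp (-(α * x)) := by
        rw [hx]; field_simp
    _ = c * exp (β * x) := by rw [mul_assoc, ← exp_add]; ring_nf

theorem mul_exp_mul_log_div {p t ζ : ℝ} (hp : 0 < p) (ht : 0 < t) (hζ : 0 < ζ)
    (hαβ : α + β ≠ 0) :
    t * exp (β * ((1 / (α + β)) * log (p / (ζ * t)))) =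
      t ^ (α / (α + β)) * p ^ (β / (α + β)) / ζ ^ (β / (α + β)) := by
  have hexp : α / (α + β) = 1 - β / (α + β) := by field_simp; ring
  rw [show β * ((1 / (α + β)) * log (p / (ζ * t))) = log (p / (ζ * t)) * (β / (α + β)) by ring,
    ← rpow_def_of_pos (by positivity), div_rpow hp.le (by positivity), mul_rpow hζ.le ht.le,
    hexp, rpow_sub ht, rpow_one]
  field_simp

end

/-- Explicit solution of the one-round trading problem in an
exponential-utility market, and the resulting post-trade price. -/
theorem stmt_6 (I : ℕ) (hI : 2 ≤ I) (α β C : ℝ) (hα : 0 < α) (hβ : 0 < β) (hC : 0 < C)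
    (π θ : Fin I → ℝ) (hπ : ∀ i, 0 < π i) (hθ : ∀ i, 0 < θ i) :
    let ζ : ℝ := ((∑ k, θ k ^ (α / (α + β)) * π k ^ (β / (α + β))) / C) ^ ((α + β) / β)
    let zstar : Fin I → ℝ := fun i => (1 / (α + β)) * Real.log (π i / (ζ * θ i))
    -- `zstar` is feasible
    (∑ i, θ i * Real.exp (β * zstar i) ≤ C) ∧
    -- `zstar` is optimal
    (∀ z : Fin I → ℝ, (∑ i, θ i * Real.exp (β * z i)) ≤ C →
      -(1 / α) * ∑ i, π i * Real.exp (-(α * z i)) ≤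
        -(1 / α) * ∑ i, π i * Real.exp (-(α * zstar i))) ∧
    -- `zstar` is the unique optimal solution
    (∀ z : Fin I → ℝ, (∑ i, θ i * Real.exp (β * z i)) ≤ C →
      -(1 / α) * ∑ i, π i * Real.exp (-(α * z i)) =
        -(1 / α) * ∑ i, π i * Real.exp (-(α * zstar i)) →
      z = zstar) ∧
    -- post-trade price
    (∀ i, θ i * Real.exp (β * zstar i) / ∑ k, θ k * Real.exp (β * zstar k) =
      θ i ^ (α / (α + β)) * π i ^ (β / (α + β)) /
        ∑ k, θ k ^ (α / (α + β)) * π k ^ (β / (α + β))) := by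
  intro ζ zstar
  set w : Fin I → ℝ := fun k => θ k ^ (α / (α + β)) * π k ^ (β / (α + β))
  have hαβ : α + β ≠ 0 := by positivity
  have hS : 0 < ∑ k, w k :=
    sum_pos (fun k _ => by have := hθ k; have := hπ k; positivity)
      (univ_nonempty_iff.2 ⟨⟨0, by omega⟩⟩)
  have hζ : 0 < ζ := by positivity
  have hζ_rpow : ζ ^ (β / (α + β)) = (∑ k, w k) / C := by
    rw [← inv_div, Real.rpow_rpow_inv (by positivity) (by positivity)]
  have hfoc (i : Fin I) : π i * Real.exp (-(α * zstar i)) = ζ * θ i * Real.exp (β * zstar i) :=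
    mul_exp_neg_eq_mul_exp_of_eq_log (hπ i) (mul_pos hζ (hθ i)) hαβ
  have hprice (i : Fin I) : θ i * Real.exp (β * zstar i) = C * w i / ∑ k, w k := by
    rw [mul_exp_mul_log_div (hπ i) (hθ i) hζ hαβ, hζ_rpow]
    field_simp
    rfl
  have hfeas : ∑ i, θ i * Real.exp (β * zstar i) = C := by
    simp only [hprice, ← sum_div, ← mul_sum]
    field_simp
  have hneg : -(1 / α) < 0 := by simp [hα]
  refine ⟨hfeas.le, fun z hz => ?_, fun z hz heq => ?_, fun i => ?_⟩
  · exact mul_le_mul_of_nonpos_left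
      (sum_mul_exp_neg_le_of_foc hα.le hβ (fun i => (hπ i).le) hζ.le hfoc hfeas hz) hneg.le
  · by_contra hne
    have := sum_mul_exp_neg_lt_of_foc hα hβ hπ hζ.le hfoc hfeas hz hne
    rw [mul_left_cancel₀ hneg.ne heq] at this
    exact lt_irrefl _ this
  · rw [hfeas, hprice]
    field_simp
    rfl
end

section
/- Let I ≥ 2 and J ≥ 1, let β > 0 and α_j > 0 for j = 1,…,J, let (θ_1,…,θ_I) and (π_{1,j},…,π_{I,j}) for each j be probability vectors with all components strictly positive, let W₀ > 0, w_{j,0} > 0, and w₀ᵃˡˡ = W₀ + Σ_j w_{j,0}. Fix any weights ω_1,…,ω_J > 0 and let (x*_1,…,x*_J) ∈ (ℝ^I)^J be any maximizer of Σ_{j=1}^J ω_j·( −(1/α_j)·Σ_{i=1}^I π_{i,j}·e^{−α_j x_{i,j}} ) subject to Σ_{i=1}^I θ_i·e^{−β·(w₀ᵃˡˡ − Σ_{j=1}^J x_{i,j})} ≤ e^{−β W₀}. Set y*_i = w₀ᵃˡˡ − Σ_{j=1}^J x*_{i,j} and define the price p*_i = θ_i·e^{−β y*_i} / Σ_{k=1}^I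 θ_k·e^{−β y*_k}. Then, with η_j = (1/α_j)/(Σ_{k=1}^J (1/α_k) + 1/β) and η = (1/β)/(Σ_{k=1}^J (1/α_k) + 1/β), one has p*_i = θ_i^η·Π_{j=1}^J π_{i,j}^{η_j} / Σ_{k=1}^I ( θ_k^η·Π_{j=1}^J π_{k,j}^{η_j} ) for every i; in particular the price is independent of the choice of the weights ω. -/
/-!
At the optimum every trader's marginal utility `ω_j π_ij e^{-α_j x_ij}` must be proportional
to the market maker's `q_i = θ_i e^{-β y_i}`. Solving these first-order conditions in logarithms
makes `log q_i` an affine function of `η log θ_i + Σ_j η_j log π_ij`, so `q` is a multiple of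
the logarithmic opinion pool, and the multiplier is fixed by making the constraint bind.
Such a point `x₀` is then the only feasible maximizer: the tangent-line inequality `e^u ≥ 1 + u`
turns feasibility of `x` into `Σ_i q_i D_i ≤ 0`, where `d = x - x₀` and `D_i = Σ_j d_ij`,
and optimality of `x` into `Σ_{j,i} (q_i/α_j)(e^{u_ij} - 1 - u_ij) ≤ Σ_i q_i D_i` with
`u_ij = -α_j d_ij`, which forces every deviation `d_ij` to vanish.
-/

open Finset
open Real (exp log add_one_le_exp add_one_lt_exp exp_log exp_sub exp_add)

lemma sum_mul_nonpos_of_sum_mul_exp_le {σ : Type*} [Fintype σ] (c u : σ → ℝ)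
    (hc : ∀ k, 0 ≤ c k) (h : ∑ k, c k * exp (u k) ≤ ∑ k, c k) : ∑ k, c k * u k ≤ 0 := by
  have htangent : ∑ k, c k * (u k + 1) ≤ ∑ k, c k * exp (u k) :=
    sum_le_sum fun k _ => mul_le_mul_of_nonneg_left (add_one_le_exp _) (hc k)
  simp only [mul_add, mul_one, sum_add_distrib] at htangent
  linarith

lemma eq_zero_of_sum_mul_exp_sub_one_sub_nonpos {σ : Type*} [Fintype σ] (c u : σ → ℝ)
    (hc : ∀ k, 0 < c k) (h : ∑ k, c k * (exp (u k) - 1 - u k) ≤ 0) (k : σ) : u k = 0 := by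
  have hterm : ∀ k, 0 ≤ c k * (exp (u k) - 1 - u k) := fun k =>
    mul_nonneg (hc k).le (by linarith [add_one_le_exp (u k)])
  have hzero := (sum_eq_zero_iff_of_nonneg fun k _ => hterm k).mp
    (le_antisymm h (sum_nonneg fun k _ => hterm k)) k (mem_univ k)
  by_contra hk
  have hgap : 0 < exp (u k) - 1 - u k := by linarith [add_one_lt_exp hk]
  exact (mul_pos (hc k) hgap).ne' hzero

variable {ι κ : Type*} [Fintype κ]

noncomputable def totalRiskTolerance (α : κ → ℝ) (β : ℝ) : ℝ := (∑ j, 1 / α j) + 1 / β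

noncomputable def logPool (β : ℝ) (α : κ → ℝ) (θ : ι → ℝ) (π : κ → ι → ℝ) (i : ι) : ℝ :=
  θ i ^ ((1 / β) / totalRiskTolerance α β) * ∏ j, π j i ^ ((1 / α j) / totalRiskTolerance α β)

noncomputable def paretoObjective [Fintype ι] (ω α : κ → ℝ) (π : κ → ι → ℝ)
    (x : κ → ι → ℝ) : ℝ :=
  ∑ j, ω j * (-(1 / α j) * ∑ i, π j i * exp (-(α j * x j i)))

variable {β W lam : ℝ} {α ω : κ → ℝ} {θ q : ι → ℝ} {π x x₀ : κ → ι → ℝ}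

lemma totalRiskTolerance_pos (hβ : 0 < β) (hα : ∀ j, 0 < α j) :
    0 < totalRiskTolerance α β :=
  add_pos_of_nonneg_of_pos (sum_nonneg fun j _ => (one_div_pos.mpr (hα j)).le)
    (one_div_pos.mpr hβ)

lemma logPool_pos (hθ : ∀ i, 0 < θ i) (hπ : ∀ j i, 0 < π j i) (i : ι) :
    0 < logPool β α θ π i :=
  mul_pos (Real.rpow_pos_of_pos (hθ i) _) (prod_pos fun j _ => Real.rpow_pos_of_pos (hπ j i) _)

lemma totalRiskTolerance_mul_log_logPool (hβ : 0 < β) (hα : ∀ j, 0 < α j)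
    (hθ : ∀ i, 0 < θ i) (hπ : ∀ j i, 0 < π j i) (i : ι) :
    totalRiskTolerance α β * log (logPool β α θ π i) =
      log (θ i) / β + ∑ j, log (π j i) / α j := by
  have hT := (totalRiskTolerance_pos hβ hα).ne'
  rw [logPool, Real.log_mul (Real.rpow_pos_of_pos (hθ i) _).ne'
      (prod_pos fun j _ => Real.rpow_pos_of_pos (hπ j i) _).ne',
    Real.log_rpow (hθ i), Real.log_prod fun j _ => (Real.rpow_pos_of_pos (hπ j i) _).ne',
    mul_add, mul_sum]
  congr 1
  · field_simp
  · exact sum_congr rfl fun j _ => by rw [Real.log_rpow (hπ j i)]; field_simp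

theorem exists_kkt_point [Nonempty κ] (hβ : 0 < β) (hα : ∀ j, 0 < α j) (hω : ∀ j, 0 < ω j)
    (hθ : ∀ i, 0 < θ i) (hπ : ∀ j i, 0 < π j i) (W c : ℝ) (hc : 0 < c) :
    ∃ lam > 0, ∃ x₀ : κ → ι → ℝ,
      (∀ j i, ω j * π j i * exp (-(α j * x₀ j i)) = lam * (c * logPool β α θ π i)) ∧
      ∀ i, θ i * exp (-(β * (W - ∑ j, x₀ j i))) = c * logPool β α θ π i := by
  set T := totalRiskTolerance α β
  set A := ∑ j, 1 / α j with hA_def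
  have hA : 0 < A := sum_pos (fun j _ => one_div_pos.mpr (hα j)) univ_nonempty
  set q : ι → ℝ := fun i => c * logPool β α θ π i
  have hq : ∀ i, 0 < q i := fun i => mul_pos hc (logPool_pos hθ hπ i)
  set Ω := ∑ j, log (ω j) / α j
  set ℓ := (Ω - T * log c - W) / A with hℓ
  refine ⟨exp ℓ, Real.exp_pos ℓ,
    fun j i => (log (ω j) + log (π j i) - ℓ - log (q i)) / α j, fun j i => ?_, fun i => ?_⟩
  · have hexp : -(α j * ((log (ω j) + log (π j i) - ℓ - log (q i)) / α j)) =
        ℓ + log (q i) - (log (ω j) + log (π j i)) := by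
      field_simp [(hα j).ne']; ring
    rw [hexp, exp_sub, exp_add, exp_add, exp_log (hω j), exp_log (hπ j i), exp_log (hq i)]
    field_simp [(hω j).ne', (hπ j i).ne']
    rfl
  · have hsum : ∑ j, (log (ω j) + log (π j i) - ℓ - log (q i)) / α j =
        Ω + ∑ j, log (π j i) / α j - A * (ℓ + log (q i)) := by
      simp only [hA_def, sum_mul, Ω, ← sum_add_distrib, ← sum_sub_distrib]
      exact sum_congr rfl fun j _ => by ring
    have hAℓ : A * ℓ = Ω - T * log c - W := by rw [hℓ]; field_simp
    have hTq : T * log (q i) = T * log c + (log (θ i) / β + ∑ j, log (π j i) / α j) := by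
      rw [← totalRiskTolerance_mul_log_logPool hβ hα hθ hπ i, ← mul_add,
        Real.log_mul hc.ne' (logPool_pos hθ hπ i).ne']
    have hT : T = A + 1 / β := rfl
    have hβ1 : β * (1 / β) = 1 := mul_one_div_cancel hβ.ne'
    have hexp : -(β * (W - ∑ j, (log (ω j) + log (π j i) - ℓ - log (q i)) / α j)) =
        log (q i) - log (θ i) := by
      rw [hsum]
      linear_combination (-β) * hAℓ + (-β) * hTq + (β * log (q i)) * hT +
        (log (q i) - log (θ i)) * hβ1
    rw [hexp, exp_sub, exp_log (hq i), exp_log (hθ i)]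
    field_simp [(hθ i).ne']
    rfl

lemma paretoObjective_eq_of_kkt [Fintype ι]
    (hmarg : ∀ j i, ω j * π j i * exp (-(α j * x₀ j i)) = lam * q i) :
    paretoObjective ω α π x =
      -lam * ∑ j, ∑ i, q i / α j * exp (-(α j * (x j i - x₀ j i))) := by
  unfold paretoObjective
  rw [mul_sum]
  refine sum_congr rfl fun j _ => ?_
  rw [mul_sum, mul_sum, mul_sum]
  refine sum_congr rfl fun i _ => ?_
  have hsplit : exp (-(α j * x j i)) =
      exp (-(α j * x₀ j i)) * exp (-(α j * (x j i - x₀ j i))) := by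
    rw [← exp_add]; ring_nf
  rw [hsplit]
  linear_combination (-(1 / α j) * exp (-(α j * (x j i - x₀ j i)))) * hmarg j i

lemma mul_exp_neg_mul_sub_sum_eq (hprice : ∀ i, θ i * exp (-(β * (W - ∑ j, x₀ j i))) = q i)
    (i : ι) :
    θ i * exp (-(β * (W - ∑ j, x j i))) = q i * exp (β * ∑ j, (x j i - x₀ j i)) := by
  rw [← hprice i, mul_assoc, ← exp_add, sum_sub_distrib]
  ring_nf

/-- `hmarg` and `hprice` are the first-order conditions at `x₀`, with multiplier `lam` and with
`q i = θ i * exp (-(β * y i))` the market maker's marginal-utility weight. -/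
theorem eq_kkt_point_of_optimal [Fintype ι] (hβ : 0 < β) (hα : ∀ j, 0 < α j) (hlam : 0 < lam)
    (hq : ∀ i, 0 < q i)
    (hmarg : ∀ j i, ω j * π j i * exp (-(α j * x₀ j i)) = lam * q i)
    (hprice : ∀ i, θ i * exp (-(β * (W - ∑ j, x₀ j i))) = q i)
    (hfeas : ∑ i, θ i * exp (-(β * (W - ∑ j, x j i))) ≤ ∑ i, q i)
    (hopt : paretoObjective ω α π x₀ ≤ paretoObjective ω α π x) : x = x₀ := by
  set d : κ → ι → ℝ := fun j i => x j i - x₀ j i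
  have hbudget : ∑ i, q i * ∑ j, d j i ≤ 0 := by
    have h := sum_mul_nonpos_of_sum_mul_exp_le q (fun i => β * ∑ j, d j i) (fun i => (hq i).le)
      (by simpa only [mul_exp_neg_mul_sub_sum_eq hprice] using hfeas)
    simp only [mul_left_comm _ β, ← mul_sum] at h
    exact nonpos_of_mul_nonpos_left (by linarith) hβ
  have hgain : ∑ j, ∑ i, q i / α j * exp (-(α j * d j i)) ≤ ∑ j, ∑ i, q i / α j := by
    rw [paretoObjective_eq_of_kkt hmarg, paretoObjective_eq_of_kkt hmarg] at hopt
    simp only [sub_self, mul_zero, neg_zero, Real.exp_zero, mul_one] at hopt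
    nlinarith
  have hterm : ∀ j i, q i / α j * (exp (-(α j * d j i)) - 1 - -(α j * d j i)) =
      q i / α j * exp (-(α j * d j i)) - q i / α j + q i * d j i := fun j i => by
    field_simp [(hα j).ne']; ring
  have hswap : ∑ j, ∑ i, q i * d j i = ∑ i, q i * ∑ j, d j i := by
    rw [sum_comm]; simp only [mul_sum]
  have hzero := eq_zero_of_sum_mul_exp_sub_one_sub_nonpos (fun p : κ × ι => q p.2 / α p.1)
    (fun p => -(α p.1 * d p.1 p.2)) (fun p => div_pos (hq p.2) (hα p.1)) (by
      simp only [Fintype.sum_prod_type, hterm, sum_add_distrib, sum_sub_distrib, hswap]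
      linarith)
  funext j i
  have hαd : α j * d j i = 0 := neg_eq_zero.mp (hzero (j, i))
  exact sub_eq_zero.mp ((mul_eq_zero.mp hαd).resolve_left (hα j).ne')

theorem stmt_7_general (I J : ℕ) (hI : 2 ≤ I) (hJ : 1 ≤ J)
    (β : ℝ) (hβ : 0 < β) (αv : Fin J → ℝ) (hα : ∀ j, 0 < αv j)
    (θ : Fin I → ℝ) (hθ : ∀ i, 0 < θ i)
    (π : Fin J → Fin I → ℝ) (hπ : ∀ j i, 0 < π j i)
    (W0 : ℝ) (w0 : Fin J → ℝ)
    (ω : Fin J → ℝ) (hω : ∀ j, 0 < ω j)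
    (xstar : Fin J → Fin I → ℝ)
    -- `xstar` is feasible for the Pareto problem
    (hfeas : ∑ i, θ i * Real.exp (-(β * ((W0 + ∑ j, w0 j) - ∑ j, xstar j i))) ≤
      Real.exp (-(β * W0)))
    -- `xstar` maximizes the `ω`-weighted sum of the traders' utilities
    (hopt : ∀ x : Fin J → Fin I → ℝ,
      (∑ i, θ i * Real.exp (-(β * ((W0 + ∑ j, w0 j) - ∑ j, x j i))) ≤
        Real.exp (-(β * W0))) →
      (∑ j, ω j * (-(1 / αv j) * ∑ i, π j i * Real.exp (-(αv j * x j i)))) ≤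
      (∑ j, ω j * (-(1 / αv j) * ∑ i, π j i * Real.exp (-(αv j * xstar j i))))) :
    ∀ i, (θ i * Real.exp (-(β * ((W0 + ∑ j, w0 j) - ∑ j, xstar j i)))) /
        (∑ k, θ k * Real.exp (-(β * ((W0 + ∑ j, w0 j) - ∑ j, xstar j k)))) =
      (θ i ^ ((1 / β) / ((∑ j, 1 / αv j) + 1 / β)) *
          ∏ j, π j i ^ ((1 / αv j) / ((∑ k, 1 / αv k) + 1 / β))) /
      (∑ k, θ k ^ ((1 / β) / ((∑ j, 1 / αv j) + 1 / β)) *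
          ∏ j, π j k ^ ((1 / αv j) / ((∑ l, 1 / αv l) + 1 / β))) := by
  have : Nonempty (Fin J) := ⟨⟨0, hJ⟩⟩
  have : Nonempty (Fin I) := ⟨⟨0, by omega⟩⟩
  have hZ : 0 < ∑ k, logPool β αv θ π k :=
    sum_pos (fun k _ => logPool_pos hθ hπ k) univ_nonempty
  have hc : 0 < exp (-(β * W0)) / ∑ k, logPool β αv θ π k := div_pos (Real.exp_pos _) hZ
  obtain ⟨lam, hlam, x₀, hmarg, hprice⟩ := exists_kkt_point hβ hα hω hθ hπ (W0 + ∑ j, w0 j) _ hc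
  set N := logPool β αv θ π
  set c := exp (-(β * W0)) / ∑ k, N k
  have hq_sum : ∑ i, c * N i = exp (-(β * W0)) := by
    rw [← mul_sum]; exact div_mul_cancel₀ _ hZ.ne'
  have hx : xstar = x₀ :=
    eq_kkt_point_of_optimal hβ hα hlam (fun i => mul_pos hc (logPool_pos hθ hπ i)) hmarg hprice
      (hq_sum ▸ hfeas) (hopt x₀ (by simp only [hprice, hq_sum, le_refl]))
  intro i
  change _ = N i / ∑ k, N k
  simp only [hx, hprice, ← mul_sum]
  field_simp

/-- In an exponential-utility market, the limiting price is the weighted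
geometric mean of all participants' beliefs, independently of the Pareto weights. -/
theorem stmt_7 (I J : ℕ) (hI : 2 ≤ I) (hJ : 1 ≤ J)
    (β : ℝ) (hβ : 0 < β) (αv : Fin J → ℝ) (hα : ∀ j, 0 < αv j)
    (θ : Fin I → ℝ) (hθ : ∀ i, 0 < θ i) (hθs : ∑ i, θ i = 1)
    (π : Fin J → Fin I → ℝ) (hπ : ∀ j i, 0 < π j i) (hπs : ∀ j, ∑ i, π j i = 1)
    (W0 : ℝ) (hW0 : 0 < W0) (w0 : Fin J → ℝ) (hw0 : ∀ j, 0 < w0 j)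
    (ω : Fin J → ℝ) (hω : ∀ j, 0 < ω j)
    (xstar : Fin J → Fin I → ℝ)
    -- `xstar` is feasible for the Pareto problem
    (hfeas : ∑ i, θ i * Real.exp (-(β * ((W0 + ∑ j, w0 j) - ∑ j, xstar j i))) ≤
      Real.exp (-(β * W0)))
    -- `xstar` maximizes the `ω`-weighted sum of the traders' utilities
    (hopt : ∀ x : Fin J → Fin I → ℝ,
      (∑ i, θ i * Real.exp (-(β * ((W0 + ∑ j, w0 j) - ∑ j, x j i))) ≤
        Real.exp (-(β * W0))) →
      (∑ j, ω j * (-(1 / αv j) * ∑ i, π j i * Real.exp (-(αv j * x j i)))) ≤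
      (∑ j, ω j * (-(1 / αv j) * ∑ i, π j i * Real.exp (-(αv j * xstar j i))))) :
    ∀ i, (θ i * Real.exp (-(β * ((W0 + ∑ j, w0 j) - ∑ j, xstar j i)))) /
        (∑ k, θ k * Real.exp (-(β * ((W0 + ∑ j, w0 j) - ∑ j, xstar j k)))) =
      (θ i ^ ((1 / β) / ((∑ j, 1 / αv j) + 1 / β)) *
          ∏ j, π j i ^ ((1 / αv j) / ((∑ k, 1 / αv k) + 1 / β))) /
      (∑ k, θ k ^ ((1 / β) / ((∑ j, 1 / αv j) + 1 / β)) *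
          ∏ j, π j k ^ ((1 / αv j) / ((∑ l, 1 / αv l) + 1 / β))) :=
  stmt_7_general I J hI hJ β hβ αv hα θ hθ π hπ W0 w0 ω hω xstar hfeas hopt
end

section
/- Let I ≥ 2. For each i = 1,…,I let f_i : (0,1] → ℝ be differentiable and strictly increasing with f_i(1) finite, lim_{q→0⁺} f_i(q) = −∞, and f_i integrable near 0 (so that A_i(p) = ∫₀^p f_i(s) ds is finite for all p ∈ [0,1]). Define the penalty α(q) = Σ_{i=1}^I A_i(q_i) for q in the probability simplex Θ_I, and define ρ(x) = sup_{q ∈ Θ_I} { −qᵀx − α(q) } for x ∈ ℝ^I. Then ρ(x) is finite for every x ∈ ℝ^I, and the supremum is attained at a unique point q* ∈ Θ_I, which moreover satisfies 0 < q*_i < 1 for every i. -/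
/-!
Write `φᵢ(p) = p xᵢ + Aᵢ(p)`, so that the objective is `-∑ᵢ φᵢ(qᵢ)`. Each `φᵢ` is continuous and
strictly convex on `[0, 1]` (as `Aᵢ' = fᵢ` is strictly increasing) and has slope `-∞` at `0` (as
`Aᵢ(t) ≤ t fᵢ(t)`). By compactness of the simplex `∑ᵢ φᵢ(qᵢ)` has a minimiser there, unique by
strict convexity. No coordinate of it vanishes: moving a little mass onto a vanishing coordinate
would decrease the sum. Since `I ≥ 2`, no coordinate equals `1` either.
-/

def simplex (I : ℕ) : Set (Fin I → ℝ) := {q | (∀ i, 0 ≤ q i) ∧ ∑ i, q i = 1}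

noncomputable def penaltyA (f : ℝ → ℝ) (p : ℝ) : ℝ := ∫ s in (0 : ℝ)..p, f s

open Set Filter Topology Function

theorem Fintype.sum_apply_update {ι α β : Type*} [Fintype ι] [DecidableEq ι] [AddCommGroup β]
    (g : ι → α → β) (q : ι → α) (i : ι) (a : α) :
    ∑ k, g k (update q i a k) = ∑ k, g k (q k) + (g i a - g i (q i)) := by
  simp_rw [apply_update g q i a]
  rw [Finset.sum_update_of_mem (Finset.mem_univ i),
    Finset.sum_eq_add_sum_sdiff_singleton_of_mem (Finset.mem_univ i) (fun k => g k (q k))]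
  abel

theorem slope_mul_const_add (c : ℝ) (g : ℝ → ℝ) {a b : ℝ} (hab : a ≠ b) :
    slope (fun p => p * c + g p) a b = c + slope g a b := by
  rw [slope_def_field, slope_def_field]
  field_simp [sub_ne_zero.2 hab.symm]
  ring

section SeparableMinimization

variable {ι : Type*} [Fintype ι]

theorem StrictConvexOn.sum_pi {𝕜 : Type*} [Field 𝕜] [LinearOrder 𝕜] [IsStrictOrderedRing 𝕜]
    {s : ι → Set 𝕜} {φ : ι → 𝕜 → 𝕜} (hφ : ∀ i, StrictConvexOn 𝕜 (s i) (φ i)) :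
    StrictConvexOn 𝕜 (univ.pi s) (fun q => ∑ i, φ i (q i)) := by
  refine ⟨convex_pi fun i _ => (hφ i).1, fun x hx y hy hxy a b ha hb hab => ?_⟩
  obtain ⟨k, hk⟩ := Function.ne_iff.mp hxy
  simp only [Pi.add_apply, Pi.smul_apply, Finset.smul_sum, ← Finset.sum_add_distrib]
  exact Finset.sum_lt_sum
    (fun i _ => (hφ i).convexOn.2 (hx i trivial) (hy i trivial) ha.le hb.le hab)
    ⟨k, Finset.mem_univ k, (hφ k).2 (hx k trivial) (hy k trivial) hk ha hb hab⟩

theorem exists_isMinOn_sum_stdSimplex [Nonempty ι] {φ : ι → ℝ → ℝ}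
    (hφ : ∀ i, ContinuousOn (φ i) (Icc 0 1)) :
    ∃ q ∈ stdSimplex ℝ ι, IsMinOn (fun q => ∑ i, φ i (q i)) (stdSimplex ℝ ι) q := by
  classical
  exact (isCompact_stdSimplex ℝ ι).exists_isMinOn
    ⟨_, single_mem_stdSimplex ℝ (Classical.arbitrary ι)⟩
    (continuousOn_finsetSum _ fun i _ =>
      (hφ i).comp (continuous_apply i).continuousOn fun _ hq => mem_Icc_of_mem_stdSimplex hq i)

theorem update_update_mem_stdSimplex [DecidableEq ι] {q : ι → ℝ} (hq : q ∈ stdSimplex ℝ ι)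
    {i j : ι} (hij : i ≠ j) {t : ℝ} (ht : 0 ≤ t) (htj : t ≤ q j) :
    update (update q i (q i + t)) j (q j - t) ∈ stdSimplex ℝ ι := by
  refine ⟨fun k => ?_, ?_⟩
  · simp only [update_apply]
    split_ifs
    · linarith
    · linarith [hq.1 i]
    · exact hq.1 k
  · rw [Fintype.sum_apply_update (fun _ p => p), Fintype.sum_apply_update (fun _ p => p), hq.2,
      update_of_ne hij.symm]
    ring

/-- Moving mass `t` from a positive coordinate `j` onto a vanishing coordinate `i` changes the sum
by at most `t (slope φᵢ 0 t - slope φⱼ qⱼ 0)`, which is negative for small `t`. -/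
theorem IsMinOn.pos_of_sum_stdSimplex {φ : ι → ℝ → ℝ}
    (hconv : ∀ i, ConvexOn ℝ (Icc 0 1) (φ i))
    (hslope : ∀ i, Tendsto (slope (φ i) 0) (𝓝[>] 0) atBot)
    {q : ι → ℝ} (hq : q ∈ stdSimplex ℝ ι)
    (hmin : IsMinOn (fun q => ∑ i, φ i (q i)) (stdSimplex ℝ ι) q) (i : ι) : 0 < q i := by
  classical
  by_contra! hi
  have hqi : q i = 0 := le_antisymm hi (hq.1 i)
  obtain ⟨j, hj⟩ : ∃ j, 0 < q j := by
    simpa using Finset.exists_lt_of_sum_lt (s := Finset.univ) (f := 0) (g := q) (by simp [hq.2])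
  have hij : i ≠ j := by rintro rfl; linarith
  set c := slope (φ j) (q j) 0
  obtain ⟨t, hφi, ht0, htj⟩ : ∃ t, slope (φ i) 0 t < c ∧ 0 < t ∧ t < q j :=
    (((hslope i).eventually (eventually_lt_atBot c)).and (Ioo_mem_nhdsGT hj)).exists
  have hφj : c ≤ slope (φ j) (q j) (q j - t) :=
    (hconv j).slope_mono (mem_Icc_of_mem_stdSimplex hq j)
      ⟨left_mem_Icc.2 zero_le_one, by simpa using hj.ne⟩
      ⟨⟨by linarith, by linarith [(mem_Icc_of_mem_stdSimplex hq j).2]⟩, by simpa using ht0.ne'⟩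
      (by linarith)
  rw [slope_def_field, sub_zero, div_lt_iff₀ ht0] at hφi
  rw [slope_def_field, sub_sub_cancel_left, le_div_iff_of_neg (neg_lt_zero.2 ht0)] at hφj
  have hmem := update_update_mem_stdSimplex hq hij ht0.le htj.le
  have hdecr : ∑ k, φ k (update (update q i (q i + t)) j (q j - t) k) < ∑ k, φ k (q k) := by
    rw [Fintype.sum_apply_update, Fintype.sum_apply_update, update_of_ne hij.symm, hqi, zero_add]
    linarith
  exact (hmin hmem).not_gt hdecr

theorem lt_one_of_mem_stdSimplex {q : ι → ℝ} (hq : q ∈ stdSimplex ℝ ι) {i j : ι} (hij : i ≠ j)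
    (hj : 0 < q j) : q i < 1 := by
  classical
  have : q i + q j ≤ 1 := by
    rw [← hq.2, ← Finset.sum_pair hij]
    exact Finset.sum_le_univ_sum_of_nonneg hq.1
  linarith

end SeparableMinimization

section Penalty

open MeasureTheory

@[simp]
theorem penaltyA_zero (f : ℝ → ℝ) : penaltyA f 0 = 0 := intervalIntegral.integral_same

variable {f : ℝ → ℝ}

theorem continuousOn_penaltyA (hint : IntervalIntegrable f volume 0 1) :
    ContinuousOn (penaltyA f) (Icc 0 1) := by
  unfold penaltyA
  simpa [uIcc_of_le zero_le_one] using
    intervalIntegral.continuousOn_primitive_interval' hint left_mem_uIcc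

theorem penaltyA_le_mul (hmono : StrictMonoOn f (Ioc 0 1))
    (hint : IntervalIntegrable f volume 0 1) {t : ℝ} (ht : t ∈ Ioc 0 1) :
    penaltyA f t ≤ t * f t := by
  have hint_t : IntervalIntegrable f volume 0 t :=
    hint.mono_set (uIcc_subset_uIcc_left (Icc_subset_uIcc (Ioc_subset_Icc_self ht)))
  calc penaltyA f t ≤ ∫ _ in (0 : ℝ)..t, f t :=
        intervalIntegral.integral_mono_on_of_le_Ioo ht.1.le hint_t intervalIntegrable_const
          fun s hs => (hmono ⟨hs.1, hs.2.le.trans ht.2⟩ ht hs.2).le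
    _ = t * f t := by simp

theorem tendsto_slope_penaltyA_atBot (hmono : StrictMonoOn f (Ioc 0 1))
    (hlim : Tendsto f (𝓝[>] 0) atBot) (hint : IntervalIntegrable f volume 0 1) :
    Tendsto (slope (penaltyA f) 0) (𝓝[>] 0) atBot := by
  refine tendsto_atBot_mono' _ ?_ hlim
  filter_upwards [Ioc_mem_nhdsGT zero_lt_one] with t ht
  rw [slope_def_field, penaltyA_zero, sub_zero, sub_zero, div_le_iff₀ ht.1, mul_comm]
  exact penaltyA_le_mul hmono hint ht

theorem strictConvexOn_penaltyA (hdiff : DifferentiableOn ℝ f (Ioc 0 1))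
    (hmono : StrictMonoOn f (Ioc 0 1)) (hint : IntervalIntegrable f volume 0 1) :
    StrictConvexOn ℝ (Icc 0 1) (penaltyA f) := by
  refine StrictMonoOn.strictConvexOn_of_deriv (convex_Icc 0 1) (continuousOn_penaltyA hint) ?_
  rw [interior_Icc]
  have hderiv : ∀ p ∈ Ioo (0 : ℝ) 1, deriv (penaltyA f) p = f p := fun p hp =>
    (intervalIntegral.integral_hasDerivAt_right
      (hint.mono_set (uIcc_subset_uIcc_left (Icc_subset_uIcc (Ioo_subset_Icc_self hp))))
      ((hdiff.continuousOn.mono Ioo_subset_Ioc_self).stronglyMeasurableAtFilter isOpen_Ioo p hp)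
      ((hdiff.differentiableAt (Ioc_mem_nhds hp.1 hp.2)).continuousAt)).deriv
  intro a ha b hb hab
  rw [hderiv a ha, hderiv b hb]
  exact hmono (Ioo_subset_Ioc_self ha) (Ioo_subset_Ioc_self hb) hab

end Penalty

/-- The risk measure with separable penalty `α(q) = Σᵢ ∫₀^{qᵢ} fᵢ` is
finite everywhere and its defining supremum is attained at a unique interior point
of the simplex. -/
theorem stmt_8 (I : ℕ) (hI : 2 ≤ I) (f : Fin I → ℝ → ℝ)
    (hdiff : ∀ i, DifferentiableOn ℝ (f i) (Set.Ioc (0 : ℝ) 1))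
    (hmono : ∀ i, StrictMonoOn (f i) (Set.Ioc (0 : ℝ) 1))
    (hlim : ∀ i, Filter.Tendsto (f i) (nhdsWithin 0 (Set.Ioi 0)) Filter.atBot)
    (hint : ∀ i, ∀ p ∈ Set.Icc (0 : ℝ) 1, IntervalIntegrable (f i) MeasureTheory.volume 0 p) :
    ∀ x : Fin I → ℝ, ∃ qstar ∈ simplex I,
      (∀ i, 0 < qstar i ∧ qstar i < 1) ∧
      IsGreatest {v : ℝ | ∃ q ∈ simplex I, v = -(∑ i, q i * x i) - ∑ i, penaltyA (f i) (q i)}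
        (-(∑ i, qstar i * x i) - ∑ i, penaltyA (f i) (qstar i)) ∧
      (∀ q ∈ simplex I,
        -(∑ i, q i * x i) - ∑ i, penaltyA (f i) (q i) =
          -(∑ i, qstar i * x i) - ∑ i, penaltyA (f i) (qstar i) → q = qstar) := by
  intro x
  have : Nontrivial (Fin I) := Fin.nontrivial_iff_two_le.2 hI
  have hint₁ i : IntervalIntegrable (f i) MeasureTheory.volume 0 1 :=
    hint i 1 (right_mem_Icc.2 zero_le_one)
  set φ : Fin I → ℝ → ℝ := fun i p => p * x i + penaltyA (f i) p
  have hobj (q : Fin I → ℝ) :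
      -(∑ i, q i * x i) - ∑ i, penaltyA (f i) (q i) = -∑ i, φ i (q i) := by
    simp only [φ, Finset.sum_add_distrib]
    ring
  have hcont i : ContinuousOn (φ i) (Icc 0 1) :=
    (continuousOn_id.mul continuousOn_const).add (continuousOn_penaltyA (hint₁ i))
  have hconv i : StrictConvexOn ℝ (Icc 0 1) (φ i) :=
    ((LinearMap.smulRight LinearMap.id (x i)).convexOn (convex_Icc 0 1)).add_strictConvexOn
      (strictConvexOn_penaltyA (hdiff i) (hmono i) (hint₁ i))
  have hslope i : Tendsto (slope (φ i) 0) (𝓝[>] 0) atBot :=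
    (tendsto_atBot_add_const_left _ (x i)
      (tendsto_slope_penaltyA_atBot (hmono i) (hlim i) (hint₁ i))).congr'
      (eventually_nhdsWithin_of_forall fun t ht => (slope_mul_const_add _ _ (ne_of_lt ht)).symm)
  obtain ⟨q, hq, hmin⟩ := exists_isMinOn_sum_stdSimplex hcont
  have hpos := hmin.pos_of_sum_stdSimplex (fun i => (hconv i).convexOn) hslope hq
  refine ⟨q, hq, fun i => ⟨hpos i, ?_⟩, ⟨⟨q, hq, rfl⟩, ?_⟩, fun q' hq' heq => ?_⟩
  · obtain ⟨j, hj⟩ := exists_ne i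
    exact lt_one_of_mem_stdSimplex hq hj.symm (hpos j)
  · rintro _ ⟨q', hq', rfl⟩
    rw [hobj, hobj]
    exact neg_le_neg (hmin hq')
  · rw [hobj, hobj, neg_inj] at heq
    have hsconv := (StrictConvexOn.sum_pi hconv).subset
      (pi_univ_Icc (0 : Fin I → ℝ) 1 ▸ stdSimplex_subset_Icc ℝ) (convex_stdSimplex ℝ _)
    exact hsconv.eq_of_isMinOn (fun y hy => heq.trans_le (hmin hy)) hmin hq' hq
end

section
/- Let I ≥ 2, J ≥ 1, 0 < γ < 1, let (θ_1,…,θ_I) and (π_{1,j},…,π_{I,j}) for j = 1,…,J be probability vectors with strictly positive entries, let ω_1,…,ω_J > 0, W₀ > 0, and w₀ᵃˡˡ > W₀. Consider the problem: maximize Σ_{j=1}^J ω_j·Σ_{i=1}^I π_{i,j}·x_{i,j}^γ over x_j ∈ ℝ^I₊ (j = 1,…,J) and y ∈ ℝ^I₊, subject to y + Σ_{j=1}^J x_j = w₀ᵃˡˡ·e and Σ_{i=1}^I θ_i·y_i^γ ≥ W₀^γ. Then an optimal solution (x*, y*) exists, and there exists a Lagrange multiplier η > 0 such that the associated price p*_i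 = θ_i·(y*_i)^{γ−1} / Σ_{k=1}^I θ_k·(y*_k)^{γ−1} satisfies p*_i = ( η^{1/(1−γ)}·θ_i^{1/(1−γ)} + Σ_{j=1}^J ω_j^{1/(1−γ)}·π_{i,j}^{1/(1−γ)} )^{1−γ} / Σ_{k=1}^I ( η^{1/(1−γ)}·θ_k^{1/(1−γ)} + Σ_{j=1}^J ω_j^{1/(1−γ)}·π_{k,j}^{1/(1−γ)} )^{1−γ} for every i. Thus in a CRRA (power utility) market the limiting price is always a weighted power mean of all participants' beliefs, with only the aggregation weights depending on the Pareto weights ω. -/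
/-!
The optimum is found by Lagrangian sufficiency. With a multiplier `η` on the market maker's
constraint, the Lagrangian `Σ_j ω_j Σ_i π_ij x_ij^γ + η Σ_i θ_i y_i^γ` separates over states,
and in state `i` it is a weighted sum of concave powers of shares of `w₀ᵃˡˡ`. Such a sum is
maximised by equalising the weighted marginal utilities, i.e. by sharing `w₀ᵃˡˡ` in proportion
to the weights raised to `r = 1/(1-γ)`. The multiplier is then chosen by the intermediate value
theorem so that the constraint binds. Since `θ_i y_i^(γ-1)` is `1/η` times the common marginal
utility `(w₀ᵃˡˡ / S_i)^(γ-1)` with `S_i = (ηθ_i)^r + Σ_j (ω_j π_ij)^r`, the normalised price is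
`S_i^(1-γ) / Σ_k S_k^(1-γ)`.
-/

open Finset

namespace Real

theorem rpow_le_rpow_add_mul_sub {γ a b : ℝ} (hγ0 : 0 ≤ γ) (hγ1 : γ ≤ 1) (ha : 0 ≤ a)
    (hb : 0 < b) : a ^ γ ≤ b ^ γ + γ * b ^ (γ - 1) * (a - b) := by
  have bernoulli := rpow_one_add_le_one_add_mul_self (s := a / b - 1)
    (by linarith [div_nonneg ha hb.le]) hγ0 hγ1
  rw [add_sub_cancel, div_rpow ha hb.le, div_le_iff₀ (rpow_pos_of_pos hb γ)] at bernoulli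
  calc a ^ γ ≤ (1 + γ * (a / b - 1)) * b ^ γ := bernoulli
    _ = b ^ γ + γ * (b ^ γ / b) * (a - b) := by field_simp
    _ = _ := by rw [rpow_sub_one hb.ne']

theorem sum_mul_rpow_le_of_mul_rpow_sub_one_eq {ι : Type*} [Fintype ι] {γ μ : ℝ} (hγ0 : 0 ≤ γ)
    (hγ1 : γ ≤ 1) {c a a' : ι → ℝ} (hc : ∀ k, 0 ≤ c k) (ha : ∀ k, 0 < a k)
    (ha' : ∀ k, 0 ≤ a' k) (hsum : ∑ k, a' k = ∑ k, a k)
    (hmarg : ∀ k, c k * a k ^ (γ - 1) = μ) :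
    ∑ k, c k * a' k ^ γ ≤ ∑ k, c k * a k ^ γ :=
  calc ∑ k, c k * a' k ^ γ ≤ ∑ k, (c k * a k ^ γ + γ * μ * (a' k - a k)) := by
        gcongr with k
        rw [← hmarg k]
        linear_combination
          mul_le_mul_of_nonneg_left (rpow_le_rpow_add_mul_sub hγ0 hγ1 (ha' k) (ha k)) (hc k)
    _ = ∑ k, c k * a k ^ γ := by
        rw [sum_add_distrib, ← mul_sum, sum_sub_distrib, hsum, sub_self, mul_zero, add_zero]

theorem mul_mul_rpow_one_div_one_sub_rpow_sub_one {γ c s : ℝ} (hγ : γ ≠ 1) (hc : 0 < c)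
    (hs : 0 ≤ s) : c * (c ^ (1 / (1 - γ)) * s) ^ (γ - 1) = s ^ (γ - 1) := by
  have h1γ : 1 - γ ≠ 0 := sub_ne_zero.2 hγ.symm
  rw [mul_rpow (rpow_nonneg hc.le _) hs, ← rpow_mul hc.le,
    show 1 / (1 - γ) * (γ - 1) = -1 by field_simp; ring, rpow_neg_one, ← mul_assoc,
    mul_inv_cancel₀ hc.ne', one_mul]

theorem exists_pos_sum_mul_rpow_mul_div_eq {ι : Type*} [Fintype ι] {γ W w : ℝ} (hγ : 0 < γ)
    {θ A B : ι → ℝ} (hθ : ∀ i, 0 ≤ θ i) (hθs : ∑ i, θ i = 1) (hA : ∀ i, 0 < A i)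
    (hB : ∀ i, 0 < B i) (hW : 0 < W) (hWw : W < w) :
    ∃ t > 0, ∑ i, θ i * (t * A i * (w / (t * A i + B i))) ^ γ = W ^ γ := by
  set g : ℝ → ℝ := fun t => ∑ i, θ i * (t * A i * (w / (t * A i + B i))) ^ γ
  have hden : ∀ t, 0 ≤ t → ∀ i, 0 < t * A i + B i := fun t ht i => by
    have := hA i; have := hB i; positivity
  have hWw' : 0 < w - W := sub_pos.2 hWw
  have hterm : ∀ i, 0 ≤ W * B i / (A i * (w - W)) := fun i => by
    have := hA i; have := hB i; positivity
  set T := ∑ i, W * B i / (A i * (w - W))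
  have hT : 0 ≤ T := sum_nonneg fun i _ => hterm i
  have hg : ContinuousOn g (Set.Icc 0 T) := by
    refine continuousOn_finsetSum _ fun i _ => continuousOn_const.mul ?_
    refine ContinuousOn.rpow_const ?_ fun _ _ => Or.inr hγ.le
    exact (continuousOn_id.mul continuousOn_const).mul
      (continuousOn_const.div (by fun_prop) fun t ht => (hden t ht.1 i).ne')
  have hg0 : g 0 = 0 := by simp [g, zero_rpow hγ.ne']
  have hgT : W ^ γ ≤ g T := by
    have hW_le : ∀ i, W ≤ T * A i * (w / (T * A i + B i)) := fun i => by
      have hle : W * B i / (A i * (w - W)) ≤ T :=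
        single_le_sum (f := fun i => W * B i / (A i * (w - W))) (fun i _ => hterm i) (mem_univ i)
      rw [div_le_iff₀ (mul_pos (hA i) hWw')] at hle
      rw [mul_div_assoc', le_div_iff₀ (hden T hT i)]
      nlinarith
    calc W ^ γ = ∑ i, θ i * W ^ γ := by rw [← sum_mul, hθs, one_mul]
      _ ≤ g T := sum_le_sum fun i _ =>
          mul_le_mul_of_nonneg_left (rpow_le_rpow hW.le (hW_le i) hγ.le) (hθ i)
  obtain ⟨t, ht, hgt⟩ := intermediate_value_Icc hT hg
    ⟨by rw [hg0]; positivity, hgT⟩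
  refine ⟨t, ht.1.lt_of_ne ?_, hgt⟩
  rintro rfl
  exact (rpow_pos_of_pos hW γ).ne' (hgt.symm.trans hg0)

end Real

section CRRAMarket

variable {I J : ℕ} (γ : ℝ) (θ : Fin I → ℝ) (π : Fin J → Fin I → ℝ) (ω : Fin J → ℝ) (w η : ℝ)

noncomputable def crraAggregate (i : Fin I) : ℝ :=
  η ^ (1 / (1 - γ)) * θ i ^ (1 / (1 - γ)) + ∑ j, ω j ^ (1 / (1 - γ)) * π j i ^ (1 / (1 - γ))

/-- Each agent receives a share of `w` in state `i` proportional to its weight (`ηθ_i` for the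
market maker, `ω_j π_ij` for trader `j`) raised to `1/(1-γ)`. -/
noncomputable def crraMakerAlloc (i : Fin I) : ℝ :=
  (η * θ i) ^ (1 / (1 - γ)) * (w / crraAggregate γ θ π ω η i)

noncomputable def crraTraderAlloc (j : Fin J) (i : Fin I) : ℝ :=
  (ω j * π j i) ^ (1 / (1 - γ)) * (w / crraAggregate γ θ π ω η i)

variable {γ θ π ω w η}

theorem crraAggregate_pos (hθ : ∀ i, 0 < θ i) (hπ : ∀ j i, 0 < π j i) (hω : ∀ j, 0 < ω j)
    (hη : 0 < η) (i : Fin I) : 0 < crraAggregate γ θ π ω η i :=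
  add_pos_of_pos_of_nonneg (by have := hθ i; positivity)
    (sum_nonneg fun j _ => by have := hω j; have := hπ j i; positivity)

theorem crraMakerAlloc_pos (hθ : ∀ i, 0 < θ i) (hπ : ∀ j i, 0 < π j i) (hω : ∀ j, 0 < ω j)
    (hw : 0 < w) (hη : 0 < η) (i : Fin I) : 0 < crraMakerAlloc γ θ π ω w η i := by
  have := hθ i; have := crraAggregate_pos (γ := γ) hθ hπ hω hη i
  unfold crraMakerAlloc; positivity

theorem crraTraderAlloc_pos (hθ : ∀ i, 0 < θ i) (hπ : ∀ j i, 0 < π j i) (hω : ∀ j, 0 < ω j)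
    (hw : 0 < w) (hη : 0 < η) (j : Fin J) (i : Fin I) : 0 < crraTraderAlloc γ θ π ω w η j i := by
  have := hω j; have := hπ j i; have := crraAggregate_pos (γ := γ) hθ hπ hω hη i
  unfold crraTraderAlloc; positivity

theorem crraMakerAlloc_add_sum_crraTraderAlloc (hθ : ∀ i, 0 < θ i) (hπ : ∀ j i, 0 < π j i)
    (hω : ∀ j, 0 < ω j) (hη : 0 < η) (i : Fin I) :
    crraMakerAlloc γ θ π ω w η i + ∑ j, crraTraderAlloc γ θ π ω w η j i = w := by
  have hS := (crraAggregate_pos (γ := γ) hθ hπ hω hη i).ne'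
  unfold crraMakerAlloc crraTraderAlloc
  rw [← sum_mul, ← add_mul, Real.mul_rpow hη.le (hθ i).le]
  simp_rw [Real.mul_rpow (hω _).le (hπ _ i).le]
  rw [← crraAggregate, mul_div_cancel₀ _ hS]

theorem mul_crraMakerAlloc_rpow_sub_one (hγ1 : γ < 1) (hθ : ∀ i, 0 < θ i) (hπ : ∀ j i, 0 < π j i)
    (hω : ∀ j, 0 < ω j) (hw : 0 < w) (hη : 0 < η) (i : Fin I) :
    η * θ i * crraMakerAlloc γ θ π ω w η i ^ (γ - 1) = (w / crraAggregate γ θ π ω η i) ^ (γ - 1) :=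
  Real.mul_mul_rpow_one_div_one_sub_rpow_sub_one hγ1.ne (mul_pos hη (hθ i))
    (div_pos hw (crraAggregate_pos hθ hπ hω hη i)).le

theorem mul_crraTraderAlloc_rpow_sub_one (hγ1 : γ < 1) (hθ : ∀ i, 0 < θ i)
    (hπ : ∀ j i, 0 < π j i) (hω : ∀ j, 0 < ω j) (hw : 0 < w) (hη : 0 < η) (j : Fin J) (i : Fin I) :
    ω j * π j i * crraTraderAlloc γ θ π ω w η j i ^ (γ - 1) =
      (w / crraAggregate γ θ π ω η i) ^ (γ - 1) :=
  Real.mul_mul_rpow_one_div_one_sub_rpow_sub_one hγ1.ne (mul_pos (hω j) (hπ j i))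
    (div_pos hw (crraAggregate_pos hθ hπ hω hη i)).le

theorem crra_lagrangian_le (hγ0 : 0 < γ) (hγ1 : γ < 1) (hθ : ∀ i, 0 < θ i)
    (hπ : ∀ j i, 0 < π j i) (hω : ∀ j, 0 < ω j) (hw : 0 < w) (hη : 0 < η)
    {xs : Fin J → Fin I → ℝ} {y : Fin I → ℝ} (hxs : ∀ j i, 0 ≤ xs j i) (hy : ∀ i, 0 ≤ y i)
    (hres : ∀ i, y i + ∑ j, xs j i = w) :
    (∑ j, ω j * ∑ i, π j i * xs j i ^ γ) + η * ∑ i, θ i * y i ^ γ ≤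
      (∑ j, ω j * ∑ i, π j i * crraTraderAlloc γ θ π ω w η j i ^ γ) +
        η * ∑ i, θ i * crraMakerAlloc γ θ π ω w η i ^ γ := by
  have regroup : ∀ (xs : Fin J → Fin I → ℝ) (y : Fin I → ℝ),
      (∑ j, ω j * ∑ i, π j i * xs j i ^ γ) + η * ∑ i, θ i * y i ^ γ =
        ∑ i, (η * θ i * y i ^ γ + ∑ j, ω j * π j i * xs j i ^ γ) := fun xs y => by
    simp_rw [sum_add_distrib, mul_sum, mul_assoc]
    rw [sum_comm, add_comm]
  rw [regroup, regroup]
  refine sum_le_sum fun i _ => ?_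
  -- In state `i`, index `none` is the market maker and `some j` is trader `j`.
  have := Real.sum_mul_rpow_le_of_mul_rpow_sub_one_eq (ι := Option (Fin J)) hγ0.le hγ1.le
    (c := fun k => k.elim (η * θ i) fun j => ω j * π j i)
    (a := fun k => k.elim (crraMakerAlloc γ θ π ω w η i) fun j => crraTraderAlloc γ θ π ω w η j i)
    (a' := fun k => k.elim (y i) fun j => xs j i)
    (by rintro (_ | j) <;> simp only [Option.elim]
        exacts [(mul_pos hη (hθ i)).le, (mul_pos (hω j) (hπ j i)).le])
    (by rintro (_ | j) <;> simp only [Option.elim]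
        exacts [crraMakerAlloc_pos hθ hπ hω hw hη i, crraTraderAlloc_pos hθ hπ hω hw hη j i])
    (by rintro (_ | j) <;> simp only [Option.elim]; exacts [hy i, hxs j i])
    (by simp only [Fintype.sum_option, Option.elim]
        rw [hres, crraMakerAlloc_add_sum_crraTraderAlloc hθ hπ hω hη])
    (by rintro (_ | j) <;> simp only [Option.elim]
        exacts [mul_crraMakerAlloc_rpow_sub_one hγ1 hθ hπ hω hw hη i,
          mul_crraTraderAlloc_rpow_sub_one hγ1 hθ hπ hω hw hη j i])
  simpa only [Fintype.sum_option, Option.elim] using this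

theorem mul_crraMakerAlloc_rpow_sub_one_div_sum (hγ1 : γ < 1) (hθ : ∀ i, 0 < θ i)
    (hπ : ∀ j i, 0 < π j i) (hω : ∀ j, 0 < ω j) (hw : 0 < w) (hη : 0 < η) (i : Fin I) :
    θ i * crraMakerAlloc γ θ π ω w η i ^ (γ - 1) /
        ∑ k, θ k * crraMakerAlloc γ θ π ω w η k ^ (γ - 1) =
      crraAggregate γ θ π ω η i ^ (1 - γ) / ∑ k, crraAggregate γ θ π ω η k ^ (1 - γ) := by
  have hmarg : ∀ k, θ k * crraMakerAlloc γ θ π ω w η k ^ (γ - 1) =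
      (η⁻¹ * w ^ (γ - 1)) * crraAggregate γ θ π ω η k ^ (1 - γ) := fun k => by
    have hS := crraAggregate_pos (γ := γ) hθ hπ hω hη k
    rw [← inv_mul_cancel_left₀ hη.ne' (θ k * _), ← mul_assoc η,
      mul_crraMakerAlloc_rpow_sub_one hγ1 hθ hπ hω hw hη, Real.div_rpow hw.le hS.le,
      div_eq_mul_inv, ← Real.rpow_neg hS.le, neg_sub, mul_assoc]
  simp_rw [hmarg, ← mul_sum]
  exact mul_div_mul_left _ _ (by positivity)

theorem exists_sum_mul_crraMakerAlloc_rpow_eq [Nonempty (Fin J)] (hγ0 : 0 < γ) (hγ1 : γ < 1)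
    (hθ : ∀ i, 0 < θ i) (hθs : ∑ i, θ i = 1) (hπ : ∀ j i, 0 < π j i) (hω : ∀ j, 0 < ω j)
    {W : ℝ} (hW : 0 < W) (hWw : W < w) :
    ∃ η > 0, ∑ i, θ i * crraMakerAlloc γ θ π ω w η i ^ γ = W ^ γ := by
  set r := 1 / (1 - γ)
  -- With `t = η ^ r` the market maker's share `t θ_i^r w / (t θ_i^r + B_i)` is a Möbius
  -- function of `t`.
  obtain ⟨t, ht, hbind⟩ := Real.exists_pos_sum_mul_rpow_mul_div_eq hγ0 (fun i => (hθ i).le) hθs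
    (A := fun i => θ i ^ r) (B := fun i => ∑ j, ω j ^ r * π j i ^ r)
    (fun i => Real.rpow_pos_of_pos (hθ i) r)
    (fun i => sum_pos (fun j _ => by have := hω j; have := hπ j i; positivity) univ_nonempty)
    hW hWw
  have htr : (t ^ (1 - γ)) ^ r = t := by
    rw [← Real.rpow_mul ht.le, mul_one_div_cancel (sub_pos.2 hγ1).ne', Real.rpow_one]
  refine ⟨t ^ (1 - γ), Real.rpow_pos_of_pos ht _, ?_⟩
  convert hbind using 4 with i
  unfold crraMakerAlloc crraAggregate
  rw [Real.mul_rpow (Real.rpow_nonneg ht.le _) (hθ i).le, htr]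

end CRRAMarket

theorem stmt_13_general (I J : ℕ) (hJ : 1 ≤ J)
    (γ : ℝ) (hγ0 : 0 < γ) (hγ1 : γ < 1)
    (θ : Fin I → ℝ) (hθ : ∀ i, 0 < θ i) (hθs : ∑ i, θ i = 1)
    (π : Fin J → Fin I → ℝ) (hπ : ∀ j i, 0 < π j i)
    (ω : Fin J → ℝ) (hω : ∀ j, 0 < ω j)
    (W0 w0all : ℝ) (hW0 : 0 < W0) (hw : W0 < w0all) :
    ∃ (xs : Fin J → Fin I → ℝ) (y : Fin I → ℝ),
      -- feasibility
      (∀ j i, 0 ≤ xs j i) ∧ (∀ i, 0 ≤ y i) ∧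
      (y + ∑ j, xs j = w0all • (1 : Fin I → ℝ)) ∧
      (W0 ^ γ ≤ ∑ i, θ i * y i ^ γ) ∧
      -- optimality
      (∀ (xs' : Fin J → Fin I → ℝ) (y' : Fin I → ℝ),
        (∀ j i, 0 ≤ xs' j i) → (∀ i, 0 ≤ y' i) →
        y' + ∑ j, xs' j = w0all • (1 : Fin I → ℝ) →
        W0 ^ γ ≤ ∑ i, θ i * y' i ^ γ →
        (∑ j, ω j * ∑ i, π j i * xs' j i ^ γ) ≤ (∑ j, ω j * ∑ i, π j i * xs j i ^ γ)) ∧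
      -- price formula
      ∃ η : ℝ, 0 < η ∧ ∀ i,
        θ i * y i ^ (γ - 1) / (∑ k, θ k * y k ^ (γ - 1)) =
        (η ^ (1 / (1 - γ)) * θ i ^ (1 / (1 - γ)) +
            ∑ j, ω j ^ (1 / (1 - γ)) * π j i ^ (1 / (1 - γ))) ^ (1 - γ) /
          ∑ k, (η ^ (1 / (1 - γ)) * θ k ^ (1 / (1 - γ)) +
            ∑ j, ω j ^ (1 / (1 - γ)) * π j k ^ (1 / (1 - γ))) ^ (1 - γ) := by
  have : Nonempty (Fin J) := ⟨⟨0, hJ⟩⟩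
  have hw0 : 0 < w0all := hW0.trans hw
  obtain ⟨η, hη, hbind⟩ :=
    exists_sum_mul_crraMakerAlloc_rpow_eq (π := π) (ω := ω) hγ0 hγ1 hθ hθs hπ hω hW0 hw
  refine ⟨crraTraderAlloc γ θ π ω w0all η, crraMakerAlloc γ θ π ω w0all η,
    fun j i => (crraTraderAlloc_pos hθ hπ hω hw0 hη j i).le,
    fun i => (crraMakerAlloc_pos hθ hπ hω hw0 hη i).le,
    funext fun i => by simpa using crraMakerAlloc_add_sum_crraTraderAlloc hθ hπ hω hη i,
    hbind.ge, ?_,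
    η, hη, mul_crraMakerAlloc_rpow_sub_one_div_sum hγ1 hθ hπ hω hw0 hη⟩
  intro xs' y' hxs' hy' hres' hcon'
  have hL := crra_lagrangian_le hγ0 hγ1 hθ hπ hω hw0 hη hxs' hy'
    fun i => by simpa using congrFun hres' i
  rw [hbind] at hL
  linarith [mul_le_mul_of_nonneg_left hcon' hη.le]

/-- In a CRRA (power utility) market, the Pareto problem has an optimal
solution and the associated limiting price is a weighted power mean of the
participants' beliefs, with weights depending on the Pareto weights `ω` and a
Lagrange multiplier `η`. -/
theorem stmt_13 (I J : ℕ) (hI : 2 ≤ I) (hJ : 1 ≤ J)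
    (γ : ℝ) (hγ0 : 0 < γ) (hγ1 : γ < 1)
    (θ : Fin I → ℝ) (hθ : ∀ i, 0 < θ i) (hθs : ∑ i, θ i = 1)
    (π : Fin J → Fin I → ℝ) (hπ : ∀ j i, 0 < π j i) (hπs : ∀ j, ∑ i, π j i = 1)
    (ω : Fin J → ℝ) (hω : ∀ j, 0 < ω j)
    (W0 w0all : ℝ) (hW0 : 0 < W0) (hw : W0 < w0all) :
    ∃ (xs : Fin J → Fin I → ℝ) (y : Fin I → ℝ),
      -- feasibility
      (∀ j i, 0 ≤ xs j i) ∧ (∀ i, 0 ≤ y i) ∧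
      (y + ∑ j, xs j = w0all • (1 : Fin I → ℝ)) ∧
      (W0 ^ γ ≤ ∑ i, θ i * y i ^ γ) ∧
      -- optimality
      (∀ (xs' : Fin J → Fin I → ℝ) (y' : Fin I → ℝ),
        (∀ j i, 0 ≤ xs' j i) → (∀ i, 0 ≤ y' i) →
        y' + ∑ j, xs' j = w0all • (1 : Fin I → ℝ) →
        W0 ^ γ ≤ ∑ i, θ i * y' i ^ γ →
        (∑ j, ω j * ∑ i, π j i * xs' j i ^ γ) ≤ (∑ j, ω j * ∑ i, π j i * xs j i ^ γ)) ∧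
      -- price formula
      ∃ η : ℝ, 0 < η ∧ ∀ i,
        θ i * y i ^ (γ - 1) / (∑ k, θ k * y k ^ (γ - 1)) =
        (η ^ (1 / (1 - γ)) * θ i ^ (1 / (1 - γ)) +
            ∑ j, ω j ^ (1 / (1 - γ)) * π j i ^ (1 / (1 - γ))) ^ (1 - γ) /
          ∑ k, (η ^ (1 / (1 - γ)) * θ k ^ (1 / (1 - γ)) +
            ∑ j, ω j ^ (1 / (1 - γ)) * π j k ^ (1 / (1 - γ))) ^ (1 - γ) :=
  stmt_13_general I J hJ γ hγ0 hγ1 θ hθ hθs π hπ ω hω W0 w0all hW0 hw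
end

section
/- Let I ≥ 2, W₀ > 0, and let U : ℝ^I → ℝ be continuous, concave and monotonically increasing. Suppose the U-based pricing rule has bounded loss: there exists ȳ ∈ ℝ^I such that every y in L = { y ∈ ℝ^I : U(y) ≥ U(W₀·e) } satisfies y ≥ ȳ componentwise. For p in the probability simplex Θ_I define the correspondence S(p) = { −y : y minimizes pᵀy over L }. Then: (i) for every p in the interior of Θ_I (all components positive), S(p) is nonempty and compact; (ii) S is upper hemicontinuous at interior points: if p_n ∈ Θ_I, p_n → p̂ with p̂ in the interior of Θ_I, s_n ∈ S(p_n) and s_n → ŝ, then ŝ ∈ S(p̂); and (iii) if in addition U is strictly concave, then S(p) is a singleton for each interior p and the map p ↦ S(p) is continuous on the interior of Θ_I. -/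
open Filter Topology

section Aux

variable {I : ℕ} {U : (Fin I → ℝ) → ℝ} {W0 : ℝ} {ybar : Fin I → ℝ}

lemma sum_mul_one_smul {p : Fin I → ℝ} (hsum : ∑ i, p i = 1) :
    ∑ i, p i * (W0 • (1 : Fin I → ℝ)) i = W0 := by
  simp only [Pi.smul_apply, Pi.one_apply, smul_eq_mul, mul_one]
  rw [← Finset.sum_mul, hsum, one_mul]

lemma mem_Icc_of_feasible
    (hbound : ∀ y, U (W0 • (1 : Fin I → ℝ)) ≤ U y → ybar ≤ y)
    {p : Fin I → ℝ} {δ : ℝ} (hδ : 0 < δ) (hp : ∀ i, δ ≤ p i) (hp1 : ∀ i, p i ≤ 1)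
    {y : Fin I → ℝ} (hy : U (W0 • (1 : Fin I → ℝ)) ≤ U y)
    (hfy : ∑ i, p i * y i ≤ W0) :
    y ∈ Set.Icc ybar (fun i => ybar i + (W0 + ∑ j, |ybar j|) / δ) := by
  have hyb := hbound y hy
  refine ⟨hyb, fun i => ?_⟩
  have key : δ * (y i - ybar i) ≤ W0 + ∑ j, |ybar j| := by
    have h1 : δ * (y i - ybar i) ≤ p i * (y i - ybar i) :=
      mul_le_mul_of_nonneg_right (hp i) (sub_nonneg.2 (hyb i))
    have h2 : p i * (y i - ybar i) ≤ ∑ j, p j * (y j - ybar j) :=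
      Finset.single_le_sum
        (fun j _ => mul_nonneg (hδ.le.trans (hp j)) (sub_nonneg.2 (hyb j)))
        (Finset.mem_univ i)
    have h3 : ∑ j, p j * (y j - ybar j) = (∑ j, p j * y j) - ∑ j, p j * ybar j := by
      simp [mul_sub, Finset.sum_sub_distrib]
    have h4 : -(∑ j, p j * ybar j) ≤ ∑ j, |ybar j| := by
      rw [← Finset.sum_neg_distrib]
      refine Finset.sum_le_sum fun j _ => ?_
      calc -(p j * ybar j) ≤ |p j * ybar j| := neg_le_abs _
        _ = p j * |ybar j| := by rw [abs_mul, abs_of_nonneg (hδ.le.trans (hp j))]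
        _ ≤ 1 * |ybar j| := mul_le_mul_of_nonneg_right (hp1 j) (abs_nonneg _)
        _ = |ybar j| := one_mul _
    linarith
  have h5 : y i - ybar i ≤ (W0 + ∑ j, |ybar j|) / δ := (le_div_iff₀' hδ).2 key
  linarith

lemma exists_min (hUcont : Continuous U)
    (hbound : ∀ y, U (W0 • (1 : Fin I → ℝ)) ≤ U y → ybar ≤ y)
    {p : Fin I → ℝ} (hp : ∀ i, 0 < p i) (hsum : ∑ i, p i = 1) :
    ∃ y : Fin I → ℝ, U (W0 • (1 : Fin I → ℝ)) ≤ U y ∧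
      ∀ y' : Fin I → ℝ, U (W0 • (1 : Fin I → ℝ)) ≤ U y' →
        ∑ i, p i * y i ≤ ∑ i, p i * y' i := by
  have hne : Nonempty (Fin I) := by
    rcases Nat.eq_zero_or_pos I with h | h
    · subst h; norm_num at hsum
    · exact ⟨⟨0, h⟩⟩
  set δ := Finset.univ.inf' Finset.univ_nonempty p with hδdef
  have hδle : ∀ i, δ ≤ p i := fun i => Finset.inf'_le _ (Finset.mem_univ i)
  have hδpos : 0 < δ := by
    rw [hδdef, Finset.lt_inf'_iff]
    exact fun i _ => hp i
  have hp1 : ∀ i, p i ≤ 1 := by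
    intro i
    calc p i ≤ ∑ j, p j := Finset.single_le_sum (fun j _ => (hp j).le) (Finset.mem_univ i)
      _ = 1 := hsum
  have hfcont : Continuous fun y : Fin I → ℝ => ∑ i, p i * y i :=
    continuous_finset_sum _ fun i _ => continuous_const.mul (continuous_apply i)
  set K : Set (Fin I → ℝ) :=
    {y | U (W0 • (1 : Fin I → ℝ)) ≤ U y} ∩ {y | ∑ i, p i * y i ≤ W0} with hKdef
  have hKclosed : IsClosed K :=
    (isClosed_le continuous_const hUcont).inter (isClosed_le hfcont continuous_const)
  have hKsub : K ⊆ Set.Icc ybar (fun i => ybar i + (W0 + ∑ j, |ybar j|) / δ) :=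
    fun y hy => mem_Icc_of_feasible hbound hδpos hδle hp1 hy.1 hy.2
  have hKcomp : IsCompact K := (isCompact_Icc).of_isClosed_subset hKclosed hKsub
  have hW01 : (W0 • (1 : Fin I → ℝ)) ∈ K := by
    constructor
    · show U (W0 • (1 : Fin I → ℝ)) ≤ U (W0 • (1 : Fin I → ℝ)); exact le_rfl
    · show ∑ i, p i * (W0 • (1 : Fin I → ℝ)) i ≤ W0
      exact le_of_eq (sum_mul_one_smul hsum)
  obtain ⟨y, hyK, hymin⟩ := hKcomp.exists_isMinOn ⟨_, hW01⟩ hfcont.continuousOn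
  refine ⟨y, hyK.1, fun y' hy' => ?_⟩
  by_cases hcase : ∑ i, p i * y' i ≤ W0
  · exact isMinOn_iff.mp hymin y' ⟨hy', hcase⟩
  · calc ∑ i, p i * y i ≤ ∑ i, p i * (W0 • (1 : Fin I → ℝ)) i :=
        isMinOn_iff.mp hymin _ hW01
      _ = W0 := sum_mul_one_smul hsum
      _ ≤ ∑ i, p i * y' i := (not_le.1 hcase).le

/-- limit of minimizers is a minimizer -/
lemma lim_min (hUcont : Continuous U) {pn : ℕ → Fin I → ℝ} {phat : Fin I → ℝ}
    {yn : ℕ → Fin I → ℝ} {yhat : Fin I → ℝ}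
    (hp : Tendsto pn atTop (𝓝 phat)) (hy : Tendsto yn atTop (𝓝 yhat))
    (hmin : ∀ n, U (W0 • (1 : Fin I → ℝ)) ≤ U (yn n) ∧
      ∀ y', U (W0 • (1 : Fin I → ℝ)) ≤ U y' →
        ∑ i, pn n i * yn n i ≤ ∑ i, pn n i * y' i) :
    U (W0 • (1 : Fin I → ℝ)) ≤ U yhat ∧
      ∀ y', U (W0 • (1 : Fin I → ℝ)) ≤ U y' →
        ∑ i, phat i * yhat i ≤ ∑ i, phat i * y' i := by
  have hpc : ∀ i, Tendsto (fun n => pn n i) atTop (𝓝 (phat i)) :=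
    fun i => tendsto_pi_nhds.mp hp i
  have hyc : ∀ i, Tendsto (fun n => yn n i) atTop (𝓝 (yhat i)) :=
    fun i => tendsto_pi_nhds.mp hy i
  constructor
  · exact ge_of_tendsto' ((hUcont.tendsto yhat).comp hy) fun n => (hmin n).1
  · intro y' hy'
    have h1 : Tendsto (fun n => ∑ i, pn n i * yn n i) atTop (𝓝 (∑ i, phat i * yhat i)) :=
      tendsto_finset_sum _ fun i _ => (hpc i).mul (hyc i)
    have h2 : Tendsto (fun n => ∑ i, pn n i * y' i) atTop (𝓝 (∑ i, phat i * y' i)) :=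
      tendsto_finset_sum _ fun i _ => (hpc i).mul tendsto_const_nhds
    exact le_of_tendsto_of_tendsto' h1 h2 fun n => (hmin n).2 y' hy'

/-- uniqueness of minimizer under strict concavity -/
lemma min_uniq (hUcont : Continuous U) (hSC : StrictConcaveOn ℝ Set.univ U)
    {p : Fin I → ℝ} (hsum : ∑ i, p i = 1) {y1 y2 : Fin I → ℝ}
    (h1 : U (W0 • (1 : Fin I → ℝ)) ≤ U y1 ∧
      ∀ y', U (W0 • (1 : Fin I → ℝ)) ≤ U y' → ∑ i, p i * y1 i ≤ ∑ i, p i * y' i)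
    (h2 : U (W0 • (1 : Fin I → ℝ)) ≤ U y2 ∧
      ∀ y', U (W0 • (1 : Fin I → ℝ)) ≤ U y' → ∑ i, p i * y2 i ≤ ∑ i, p i * y' i) :
    y1 = y2 := by
  by_contra hne
  set z : Fin I → ℝ := (1/2 : ℝ) • y1 + (1/2 : ℝ) • y2 with hzdef
  have hUz : U (W0 • (1 : Fin I → ℝ)) < U z := by
    have := hSC.2 (Set.mem_univ y1) (Set.mem_univ y2) hne
      (by norm_num : (0:ℝ) < 1/2) (by norm_num : (0:ℝ) < 1/2) (by norm_num)
    have h12 : (1/2 : ℝ) • U y1 + (1/2 : ℝ) • U y2 ≥ U (W0 • (1 : Fin I → ℝ)) := by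
      simp only [smul_eq_mul]; linarith [h1.1, h2.1]
    exact lt_of_le_of_lt h12 this
  -- find ε > 0 with z - ε • 1 still feasible
  have hφ : Tendsto (fun t : ℝ => U (z - t • (1 : Fin I → ℝ))) (𝓝 0) (𝓝 (U z)) := by
    have hc : Continuous fun t : ℝ => U (z - t • (1 : Fin I → ℝ)) :=
      hUcont.comp (continuous_const.sub (continuous_id.smul continuous_const))
    simpa [ContinuousAt] using hc.continuousAt (x := (0:ℝ))
  have hev : ∀ᶠ t in 𝓝 (0:ℝ), U (W0 • (1 : Fin I → ℝ)) < U (z - t • (1 : Fin I → ℝ)) :=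
    hφ.eventually_const_lt hUz
  obtain ⟨ε, hεmem, hεU⟩ :=
    (eventually_mem_nhdsWithin.and (hev.filter_mono (nhdsWithin_le_nhds (s := Set.Ioi (0:ℝ))))).exists
  have hεpos : 0 < ε := hεmem
  -- compute objective values
  have hm : ∑ i, p i * y1 i = ∑ i, p i * y2 i :=
    le_antisymm (h1.2 y2 h2.1) (h2.2 y1 h1.1)
  have hz : ∑ i, p i * z i = ∑ i, p i * y1 i := by
    have : ∀ i, p i * z i = (p i * y1 i) / 2 + (p i * y2 i) / 2 := by
      intro i
      simp only [hzdef, Pi.add_apply, Pi.smul_apply, smul_eq_mul]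
      ring
    rw [Finset.sum_congr rfl fun i _ => this i, Finset.sum_add_distrib,
      ← Finset.sum_div, ← Finset.sum_div, hm]
    ring
  have hzeps : ∑ i, p i * (z - ε • (1 : Fin I → ℝ)) i = ∑ i, p i * z i - ε := by
    have : ∀ i, p i * (z - ε • (1 : Fin I → ℝ)) i = p i * z i - ε * p i := by
      intro i
      simp only [Pi.sub_apply, Pi.smul_apply, Pi.one_apply, smul_eq_mul]
      ring
    rw [Finset.sum_congr rfl fun i _ => this i, Finset.sum_sub_distrib,
      ← Finset.mul_sum, hsum, mul_one]
  have := h1.2 _ hεU.le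
  rw [hzeps, hz] at this
  linarith

end Aux

/-- The scoring-rule correspondence induced by a multivariate-utility market maker:
`Scr I U W0 p` is the set of negatives of cost-minimizing net wealth positions for
reported belief `p`. -/
def Scr (I : ℕ) (U : (Fin I → ℝ) → ℝ) (W0 : ℝ) (p : Fin I → ℝ) : Set (Fin I → ℝ) :=
  {s | ∃ y : Fin I → ℝ, U (W0 • (1 : Fin I → ℝ)) ≤ U y ∧
    (∀ y' : Fin I → ℝ, U (W0 • (1 : Fin I → ℝ)) ≤ U y' →
      ∑ i, p i * y i ≤ ∑ i, p i * y' i) ∧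
    s = -y}

section ScrAux

variable {I : ℕ} {U : (Fin I → ℝ) → ℝ} {W0 : ℝ} {ybar : Fin I → ℝ}

lemma scr_compact (hUcont : Continuous U)
    (hbound : ∀ y, U (W0 • (1 : Fin I → ℝ)) ≤ U y → ybar ≤ y)
    {p : Fin I → ℝ} (hp : ∀ i, 0 < p i) (hsum : ∑ i, p i = 1) :
    IsCompact (Scr I U W0 p) := by
  have hne : Nonempty (Fin I) := by
    rcases Nat.eq_zero_or_pos I with h | h
    · subst h; norm_num at hsum
    · exact ⟨⟨0, h⟩⟩
  set δ := Finset.univ.inf' Finset.univ_nonempty p with hδdef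
  have hδle : ∀ i, δ ≤ p i := fun i => Finset.inf'_le _ (Finset.mem_univ i)
  have hδpos : 0 < δ := by
    rw [hδdef, Finset.lt_inf'_iff]
    exact fun i _ => hp i
  have hp1 : ∀ i, p i ≤ 1 := by
    intro i
    calc p i ≤ ∑ j, p j := Finset.single_le_sum (fun j _ => (hp j).le) (Finset.mem_univ i)
      _ = 1 := hsum
  have hfcont : Continuous fun y : Fin I → ℝ => ∑ i, p i * y i :=
    continuous_finset_sum _ fun i _ => continuous_const.mul (continuous_apply i)
  set A : Set (Fin I → ℝ) :=
    {y | U (W0 • (1 : Fin I → ℝ)) ≤ U y ∧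
      ∀ y', U (W0 • (1 : Fin I → ℝ)) ≤ U y' →
        ∑ i, p i * y i ≤ ∑ i, p i * y' i} with hAdef
  have himg : Scr I U W0 p = Neg.neg '' A := by
    ext s
    constructor
    · rintro ⟨y, h1, h2, rfl⟩; exact ⟨y, ⟨h1, h2⟩, rfl⟩
    · rintro ⟨y, ⟨h1, h2⟩, rfl⟩; exact ⟨y, h1, h2, rfl⟩
  have hAclosed : IsClosed A := by
    have : A = {y | U (W0 • (1 : Fin I → ℝ)) ≤ U y} ∩
        ⋂ (y') (_ : U (W0 • (1 : Fin I → ℝ)) ≤ U y'),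
          {y | ∑ i, p i * y i ≤ ∑ i, p i * y' i} := by
      ext y; simp [hAdef, Set.mem_iInter]
    rw [this]
    exact (isClosed_le continuous_const hUcont).inter
      (isClosed_iInter fun y' => isClosed_iInter fun _ =>
        isClosed_le hfcont continuous_const)
  have hAsub : A ⊆ Set.Icc ybar (fun i => ybar i + (W0 + ∑ j, |ybar j|) / δ) := by
    intro y hy
    refine mem_Icc_of_feasible hbound hδpos hδle hp1 hy.1 ?_
    calc ∑ i, p i * y i ≤ ∑ i, p i * (W0 • (1 : Fin I → ℝ)) i := hy.2 _ le_rfl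
      _ = W0 := sum_mul_one_smul hsum
  have hAcomp : IsCompact A := (isCompact_Icc).of_isClosed_subset hAclosed hAsub
  rw [himg]
  exact hAcomp.image continuous_neg

end ScrAux

set_option maxHeartbeats 1000000 in
/-- The induced scoring-rule correspondence is nonempty and compact valued
at interior beliefs, upper hemicontinuous there, and single-valued and continuous when
`U` is strictly concave. -/
theorem stmt_14 (I : ℕ) (hI : 2 ≤ I) (W0 : ℝ) (hW0 : 0 < W0)
    (U : (Fin I → ℝ) → ℝ)
    (hUcont : Continuous U) (hUconc : ConcaveOn ℝ Set.univ U)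
    (hUmono : ∀ x y : Fin I → ℝ, x ≤ y → U x ≤ U y)
    (hUstrict : ∀ x y : Fin I → ℝ, x ≤ y → x ≠ y → U x < U y)
    -- bounded loss
    (ybar : Fin I → ℝ)
    (hbound : ∀ y : Fin I → ℝ, U (W0 • (1 : Fin I → ℝ)) ≤ U y → ybar ≤ y) :
    -- (i) nonempty and compact values at interior points
    (∀ p : Fin I → ℝ, (∀ i, 0 < p i) → ∑ i, p i = 1 →
      (Scr I U W0 p).Nonempty ∧ IsCompact (Scr I U W0 p)) ∧
    -- (ii) upper hemicontinuity at interior points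
    (∀ (pn : ℕ → Fin I → ℝ) (phat : Fin I → ℝ) (sn : ℕ → Fin I → ℝ) (shat : Fin I → ℝ),
      (∀ n, (∀ i, 0 ≤ pn n i) ∧ ∑ i, pn n i = 1) →
      (∀ i, 0 < phat i) → (∑ i, phat i = 1) →
      Filter.Tendsto pn Filter.atTop (nhds phat) →
      (∀ n, sn n ∈ Scr I U W0 (pn n)) →
      Filter.Tendsto sn Filter.atTop (nhds shat) →
      shat ∈ Scr I U W0 phat) ∧
    -- (iii) single-valuedness and continuity for strictly concave `U`
    (StrictConcaveOn ℝ Set.univ U →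
      ∃ g : (Fin I → ℝ) → (Fin I → ℝ),
        ContinuousOn g {p : Fin I → ℝ | (∀ i, 0 < p i) ∧ ∑ i, p i = 1} ∧
        ∀ p : Fin I → ℝ, (∀ i, 0 < p i) → ∑ i, p i = 1 → Scr I U W0 p = {g p}) := by
  classical
  refine ⟨?_, ?_, ?_⟩
  · -- (i)
    intro p hp hs
    obtain ⟨y, hy1, hy2⟩ := exists_min hUcont hbound hp hs
    exact ⟨⟨-y, y, hy1, hy2, rfl⟩, scr_compact hUcont hbound hp hs⟩
  · -- (ii)
    intro pn phat sn shat hpn hphat hsum hptend hsn hstend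
    choose y h1 h2 h3 using hsn
    have hyeq : y = fun n => -(sn n) := funext fun n => by rw [h3 n, neg_neg]
    have hytend : Filter.Tendsto y Filter.atTop (𝓝 (-shat)) := by
      rw [hyeq]; exact hstend.neg
    obtain ⟨k1, k2⟩ := lim_min hUcont hptend hytend (fun n => ⟨h1 n, h2 n⟩)
    exact ⟨-shat, k1, k2, (neg_neg shat).symm⟩
  · -- (iii)
    intro hSC
    set S : Set (Fin I → ℝ) := {p | (∀ i, 0 < p i) ∧ ∑ i, p i = 1} with hSdef
    set g : (Fin I → ℝ) → (Fin I → ℝ) := fun p =>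
      if h : (∀ i, 0 < p i) ∧ ∑ i, p i = 1 then
        -(exists_min hUcont hbound h.1 h.2).choose else 0 with hgdef
    have hgspec : ∀ p (h1 : ∀ i, 0 < p i) (h2 : ∑ i, p i = 1),
        U (W0 • (1 : Fin I → ℝ)) ≤ U (-(g p)) ∧
          ∀ y', U (W0 • (1 : Fin I → ℝ)) ≤ U y' →
            ∑ i, p i * (-(g p)) i ≤ ∑ i, p i * y' i := by
      intro p h1 h2
      have he : g p = -(exists_min hUcont hbound h1 h2).choose := dif_pos ⟨h1, h2⟩
      rw [he, neg_neg]
      exact (exists_min hUcont hbound h1 h2).choose_spec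
    have hscr : ∀ p : Fin I → ℝ, (∀ i, 0 < p i) → ∑ i, p i = 1 →
        Scr I U W0 p = {g p} := by
      intro p h1 h2
      ext s
      simp only [Set.mem_singleton_iff]
      constructor
      · rintro ⟨y, hy1, hy2, rfl⟩
        have := min_uniq hUcont hSC h2 ⟨hy1, hy2⟩ (hgspec p h1 h2)
        rw [this, neg_neg]
      · rintro rfl
        exact ⟨-(g p), (hgspec p h1 h2).1, (hgspec p h1 h2).2, (neg_neg (g p)).symm⟩
    refine ⟨g, ?_, hscr⟩
    -- continuity
    intro phat hphat
    have hne : Nonempty (Fin I) := ⟨⟨0, by omega⟩⟩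
    rw [ContinuousWithinAt]
    rw [tendsto_iff_seq_tendsto]
    intro u hu
    rw [tendsto_nhdsWithin_iff] at hu
    obtain ⟨hu1, hu2⟩ := hu
    set δ : ℝ := (Finset.univ.inf' Finset.univ_nonempty phat) / 2 with hδdef
    have hδpos : 0 < δ := by
      rw [hδdef]
      apply half_pos
      rw [Finset.lt_inf'_iff]
      exact fun i _ => hphat.1 i
    have hδlt : ∀ i, δ < phat i := by
      intro i
      have h1 : Finset.univ.inf' Finset.univ_nonempty phat ≤ phat i :=
        Finset.inf'_le _ (Finset.mem_univ i)
      have h2 : δ < Finset.univ.inf' Finset.univ_nonempty phat := by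
        rw [hδdef]
        exact half_lt_self (by rw [Finset.lt_inf'_iff]; exact fun i _ => hphat.1 i)
      linarith
    have hev : ∀ᶠ n in Filter.atTop, ∀ i, δ < u n i :=
      eventually_all.mpr fun i =>
        (tendsto_pi_nhds.mp hu1 i).eventually_const_lt (hδlt i)
    obtain ⟨N, hN⟩ := Filter.eventually_atTop.mp (hu2.and hev)
    -- the compact box
    set K₀ : Set (Fin I → ℝ) :=
      Set.Icc ybar (fun i => ybar i + (W0 + ∑ j, |ybar j|) / δ) with hK₀def
    have hmemK₀ : ∀ p : Fin I → ℝ, (∀ i, 0 < p i) → ∑ i, p i = 1 →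
        (∀ i, δ ≤ p i) → -(g p) ∈ K₀ := by
      intro p h1 h2 h3
      have hsp := hgspec p h1 h2
      refine mem_Icc_of_feasible hbound hδpos h3 ?_ hsp.1 ?_
      · intro i
        calc p i ≤ ∑ j, p j :=
            Finset.single_le_sum (fun j _ => (h1 j).le) (Finset.mem_univ i)
          _ = 1 := h2
      · calc ∑ i, p i * (-(g p)) i ≤ ∑ i, p i * (W0 • (1 : Fin I → ℝ)) i :=
            hsp.2 _ le_rfl
          _ = W0 := sum_mul_one_smul h2
    have hgphat : g phat = -(-(g phat)) := (neg_neg _).symm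
    apply tendsto_of_subseq_tendsto
    intro ns hns
    obtain ⟨K, hK⟩ := Filter.eventually_atTop.mp (hns.eventually (Filter.eventually_ge_atTop N))
    set q : ℕ → Fin I → ℝ := fun k => u (ns (k + K)) with hqdef
    have hq : ∀ k, q k ∈ S ∧ ∀ i, δ < q k i := fun k =>
      hN (ns (k + K)) (hK (k + K) (Nat.le_add_left K k))
    set v : ℕ → Fin I → ℝ := fun k => -(g (q k)) with hvdef
    have hvK₀ : ∀ k, v k ∈ K₀ := fun k =>
      hmemK₀ (q k) (hq k).1.1 (hq k).1.2 (fun i => ((hq k).2 i).le)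
    obtain ⟨z, hzK, φ, hφ, hzt⟩ := isCompact_Icc.tendsto_subseq hvK₀
    have hmst : Tendsto (fun j => φ j + K) atTop atTop :=
      tendsto_atTop_mono (fun j => Nat.le_add_right _ _) hφ.tendsto_atTop
    have hqt : Tendsto (fun j => q (φ j)) atTop (𝓝 phat) :=
      hu1.comp (hns.comp hmst)
    have hzmin := lim_min hUcont hqt hzt
      (fun j => hgspec (q (φ j)) (hq (φ j)).1.1 (hq (φ j)).1.2)
    have hzy : z = -(g phat) :=
      min_uniq hUcont hSC hphat.2 hzmin (hgspec phat hphat.1 hphat.2)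
    refine ⟨fun j => φ j + K, ?_⟩
    have hfin : Tendsto (fun j => -(v (φ j))) atTop (𝓝 (g phat)) := by
      have h' : Tendsto (fun j => -(v (φ j))) atTop (𝓝 (-z)) := hzt.neg
      rw [hzy, neg_neg] at h'
      exact h'
    exact hfin.congr fun j => by
      simp only [hvdef, hqdef, neg_neg, Function.comp_apply]
end

section
/- Let I ≥ 2 and let S : Θ_I → ℝ^I be continuous on the probability simplex Θ_I. Define U(y) = min_{p ∈ Θ_I} pᵀ·( S(p) + y ) for y ∈ ℝ^I (the minimum is attained since Θ_I is compact). Then: (i) U is finite-valued on all of ℝ^I and concave; (ii) U(y + t·e) = U(y) + t for every y ∈ ℝ^I and t ∈ ℝ; (iii) U is monotone: U(y + δ) ≥ U(y) for every δ ≥ 0 componentwise, with strict inequality if every component of δ is positive; (iv) U is continuous; and (v) the set { y ∈ ℝ^I : U(y) ≥ 0 } is contained in { y : y_i ≥ −e_iᵀS(e_i) for all i }, so the induced market maker has bounded worst-case loss. -/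
/-!
For `p` in the simplex the map `y ↦ pᵀ(S(p) + y)` is affine with slope `p`, so `U` is a pointwise
minimum of affine functions whose slopes lie in the simplex; continuity of `S` on the compact
simplex makes each minimum attained. Comparing `U(y)` and `U(y + δ)` through minimizers of either
side shows that the change `U(y + δ) - U(y)` lies between two values `pᵀδ` with `p` in the simplex.
This gives translation equivariance (`pᵀ(t e) = t`), (strict) monotonicity (`pᵀδ ≥ 0`, `> 0`) and
1-Lipschitz continuity for the sup norm (`pᵀδ ≤ ‖δ‖`). Concavity is inherited from the affine
functions, and testing at the vertex `e_i` gives `U(y) ≤ S(e_i)_i + y_i`.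
-/

/-- The multivariate utility induced by a scoring rule `S`:
`U(y) = min_{p ∈ Θ_I} pᵀ(S(p) + y)`. -/
noncomputable def inducedU (I : ℕ) (S : (Fin I → ℝ) → (Fin I → ℝ)) (y : Fin I → ℝ) : ℝ :=
  sInf {v : ℝ | ∃ p : Fin I → ℝ, (∀ i, 0 ≤ p i) ∧ ∑ i, p i = 1 ∧
    v = ∑ i, p i * (S p i + y i)}

open Finset

section Simplex

variable {ι : Type*} [Fintype ι] {p : ι → ℝ}

lemma dotProduct_nonneg_of_mem_stdSimplex (hp : p ∈ stdSimplex ℝ ι) {δ : ι → ℝ} (hδ : 0 ≤ δ) :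
    0 ≤ p ⬝ᵥ δ :=
  sum_nonneg fun i _ => mul_nonneg (hp.1 i) (hδ i)

lemma dotProduct_pos_of_mem_stdSimplex (hp : p ∈ stdSimplex ℝ ι) {δ : ι → ℝ}
    (hδ : ∀ i, 0 < δ i) : 0 < p ⬝ᵥ δ := by
  obtain ⟨i, hi⟩ : ∃ i, 0 < p i := by
    by_contra! h
    linarith [hp.2 ▸ sum_nonpos fun i (_ : i ∈ univ) => h i]
  calc 0 < p i * δ i := mul_pos hi (hδ i)
    _ ≤ p ⬝ᵥ δ := single_le_sum (fun j _ => mul_nonneg (hp.1 j) (hδ j).le) (mem_univ i)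

lemma dotProduct_smul_one_of_mem_stdSimplex (hp : p ∈ stdSimplex ℝ ι) (t : ℝ) :
    p ⬝ᵥ (t • 1) = t := by
  rw [dotProduct_smul, dotProduct_one, hp.2, smul_eq_mul, mul_one]

lemma dotProduct_le_norm_of_mem_stdSimplex (hp : p ∈ stdSimplex ℝ ι) (δ : ι → ℝ) :
    p ⬝ᵥ δ ≤ ‖δ‖ :=
  calc p ⬝ᵥ δ ≤ ∑ i, p i * ‖δ‖ :=
        sum_le_sum fun i _ => mul_le_mul_of_nonneg_left
          ((le_abs_self _).trans (norm_le_pi_norm δ i)) (hp.1 i)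
    _ = ‖δ‖ := by rw [← sum_mul, hp.2, one_mul]

end Simplex

section InducedU

variable {I : ℕ} {S : (Fin I → ℝ) → (Fin I → ℝ)}

lemma inducedU_eq_sInf_image (y : Fin I → ℝ) :
    inducedU I S y = sInf ((fun p => p ⬝ᵥ (S p + y)) '' stdSimplex ℝ (Fin I)) := by
  rw [inducedU]
  congr 1
  ext v
  exact ⟨fun ⟨p, h0, h1, hv⟩ => ⟨p, ⟨h0, h1⟩, hv.symm⟩,
    fun ⟨p, ⟨h0, h1⟩, hv⟩ => ⟨p, h0, h1, hv.symm⟩⟩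

lemma isLeast_inducedU (hI : 0 < I) (hS : ContinuousOn S (stdSimplex ℝ (Fin I)))
    (y : Fin I → ℝ) :
    IsLeast ((fun p => p ⬝ᵥ (S p + y)) '' stdSimplex ℝ (Fin I)) (inducedU I S y) := by
  have hcont : ContinuousOn (fun p => p ⬝ᵥ (S p + y)) (stdSimplex ℝ (Fin I)) :=
    continuousOn_finsetSum _ fun i _ => (continuous_apply i).continuousOn.mul
      (((continuous_apply i).comp_continuousOn hS).add continuousOn_const)
  obtain ⟨p, hp, hmin⟩ := (isCompact_stdSimplex ℝ (Fin I)).exists_isMinOn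
    ⟨_, single_mem_stdSimplex ℝ (⟨0, hI⟩ : Fin I)⟩ hcont
  have hleast : IsLeast ((fun p => p ⬝ᵥ (S p + y)) '' stdSimplex ℝ (Fin I)) (p ⬝ᵥ (S p + y)) :=
    ⟨⟨p, hp, rfl⟩, by rintro _ ⟨q, hq, rfl⟩; exact hmin hq⟩
  rwa [inducedU_eq_sInf_image, hleast.csInf_eq]

lemma inducedU_le_dotProduct (hI : 0 < I) (hS : ContinuousOn S (stdSimplex ℝ (Fin I)))
    (y : Fin I → ℝ) {p : Fin I → ℝ} (hp : p ∈ stdSimplex ℝ (Fin I)) :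
    inducedU I S y ≤ p ⬝ᵥ (S p + y) :=
  (isLeast_inducedU hI hS y).2 ⟨p, hp, rfl⟩

lemma exists_inducedU_eq_dotProduct (hI : 0 < I) (hS : ContinuousOn S (stdSimplex ℝ (Fin I)))
    (y : Fin I → ℝ) : ∃ p ∈ stdSimplex ℝ (Fin I), inducedU I S y = p ⬝ᵥ (S p + y) := by
  obtain ⟨p, hp, hval⟩ := (isLeast_inducedU hI hS y).1
  exact ⟨p, hp, hval.symm⟩

lemma exists_inducedU_add_le (hI : 0 < I) (hS : ContinuousOn S (stdSimplex ℝ (Fin I)))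
    (y δ : Fin I → ℝ) :
    ∃ p ∈ stdSimplex ℝ (Fin I), inducedU I S (y + δ) ≤ inducedU I S y + p ⬝ᵥ δ := by
  obtain ⟨p, hp, hval⟩ := exists_inducedU_eq_dotProduct hI hS y
  refine ⟨p, hp, ?_⟩
  calc inducedU I S (y + δ) ≤ p ⬝ᵥ (S p + (y + δ)) := inducedU_le_dotProduct hI hS _ hp
    _ = inducedU I S y + p ⬝ᵥ δ := by rw [hval, ← add_assoc, dotProduct_add]

lemma exists_le_inducedU_add (hI : 0 < I) (hS : ContinuousOn S (stdSimplex ℝ (Fin I)))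
    (y δ : Fin I → ℝ) :
    ∃ p ∈ stdSimplex ℝ (Fin I), inducedU I S y + p ⬝ᵥ δ ≤ inducedU I S (y + δ) := by
  obtain ⟨p, hp, hval⟩ := exists_inducedU_eq_dotProduct hI hS (y + δ)
  refine ⟨p, hp, ?_⟩
  calc inducedU I S y + p ⬝ᵥ δ ≤ p ⬝ᵥ (S p + y) + p ⬝ᵥ δ := by
        gcongr; exact inducedU_le_dotProduct hI hS _ hp
    _ = inducedU I S (y + δ) := by rw [hval, ← dotProduct_add, add_assoc]

lemma concaveOn_inducedU (hI : 0 < I) (hS : ContinuousOn S (stdSimplex ℝ (Fin I))) :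
    ConcaveOn ℝ Set.univ (inducedU I S) := by
  refine ⟨convex_univ, fun y _ z _ a b ha hb hab => ?_⟩
  obtain ⟨p, hp, hval⟩ := exists_inducedU_eq_dotProduct hI hS (a • y + b • z)
  have hsplit : p ⬝ᵥ (S p + (a • y + b • z)) = a * p ⬝ᵥ (S p + y) + b * p ⬝ᵥ (S p + z) := by
    simp only [dotProduct_add, dotProduct_smul, smul_eq_mul]
    linear_combination (-(p ⬝ᵥ S p)) * hab
  rw [smul_eq_mul, smul_eq_mul, hval, hsplit]
  gcongr <;> exact inducedU_le_dotProduct hI hS _ hp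

lemma inducedU_add_smul_one (hI : 0 < I) (hS : ContinuousOn S (stdSimplex ℝ (Fin I)))
    (y : Fin I → ℝ) (t : ℝ) : inducedU I S (y + t • 1) = inducedU I S y + t := by
  obtain ⟨p, hp, hle⟩ := exists_inducedU_add_le hI hS y (t • 1)
  obtain ⟨q, hq, hge⟩ := exists_le_inducedU_add hI hS y (t • 1)
  rw [dotProduct_smul_one_of_mem_stdSimplex hp] at hle
  rw [dotProduct_smul_one_of_mem_stdSimplex hq] at hge
  exact le_antisymm hle hge

lemma monotone_inducedU (hI : 0 < I) (hS : ContinuousOn S (stdSimplex ℝ (Fin I))) :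
    Monotone (inducedU I S) := by
  intro y z hyz
  obtain ⟨p, hp, hge⟩ := exists_le_inducedU_add hI hS y (z - y)
  rw [add_sub_cancel] at hge
  linarith [dotProduct_nonneg_of_mem_stdSimplex hp (sub_nonneg.2 hyz)]

lemma inducedU_lt_inducedU_add (hI : 0 < I) (hS : ContinuousOn S (stdSimplex ℝ (Fin I)))
    (y : Fin I → ℝ) {δ : Fin I → ℝ} (hδ : ∀ i, 0 < δ i) :
    inducedU I S y < inducedU I S (y + δ) := by
  obtain ⟨p, hp, hge⟩ := exists_le_inducedU_add hI hS y δ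
  linarith [dotProduct_pos_of_mem_stdSimplex hp hδ]

lemma lipschitzWith_inducedU (hI : 0 < I) (hS : ContinuousOn S (stdSimplex ℝ (Fin I))) :
    LipschitzWith 1 (inducedU I S) := by
  refine LipschitzWith.of_le_add_mul 1 fun z y => ?_
  obtain ⟨p, hp, hle⟩ := exists_inducedU_add_le hI hS y (z - y)
  rw [add_sub_cancel] at hle
  rw [NNReal.coe_one, one_mul, dist_eq_norm]
  linarith [dotProduct_le_norm_of_mem_stdSimplex hp (z - y)]

lemma inducedU_le_apply_add (hI : 0 < I) (hS : ContinuousOn S (stdSimplex ℝ (Fin I)))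
    (y : Fin I → ℝ) (i : Fin I) : inducedU I S y ≤ S (Pi.single i 1) i + y i := by
  simpa [single_dotProduct] using inducedU_le_dotProduct hI hS y (single_mem_stdSimplex ℝ i)

end InducedU

/-- The utility induced by a continuous scoring rule is attained,
concave, translation equivariant along `e`, monotone, continuous, and induces a
market maker with bounded worst-case loss. -/
theorem stmt_15 (I : ℕ) (hI : 2 ≤ I) (S : (Fin I → ℝ) → (Fin I → ℝ))
    (hScont : ContinuousOn S {p : Fin I → ℝ | (∀ i, 0 ≤ p i) ∧ ∑ i, p i = 1}) :
    -- (i) the minimum is attained (so `U` is finite-valued), and `U` is concave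
    (∀ y : Fin I → ℝ, ∃ p : Fin I → ℝ, (∀ i, 0 ≤ p i) ∧ ∑ i, p i = 1 ∧
      inducedU I S y = ∑ i, p i * (S p i + y i)) ∧
    ConcaveOn ℝ Set.univ (inducedU I S) ∧
    -- (ii) translation equivariance along the all-ones vector
    (∀ (y : Fin I → ℝ) (t : ℝ),
      inducedU I S (y + t • (1 : Fin I → ℝ)) = inducedU I S y + t) ∧
    -- (iii) monotonicity
    (∀ y δ : Fin I → ℝ, 0 ≤ δ → inducedU I S y ≤ inducedU I S (y + δ)) ∧
    (∀ y δ : Fin I → ℝ, (∀ i, 0 < δ i) → inducedU I S y < inducedU I S (y + δ)) ∧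
    -- (iv) continuity
    Continuous (inducedU I S) ∧
    -- (v) bounded worst-case loss
    (∀ y : Fin I → ℝ, 0 ≤ inducedU I S y →
      ∀ i, -(S (Pi.single i 1) i) ≤ y i) := by
  have hI₀ : 0 < I := by omega
  refine ⟨fun y => ?_, concaveOn_inducedU hI₀ hScont, inducedU_add_smul_one hI₀ hScont,
    fun y δ hδ => monotone_inducedU hI₀ hScont (le_add_of_nonneg_right hδ),
    fun y δ hδ => inducedU_lt_inducedU_add hI₀ hScont y hδ,
    (lipschitzWith_inducedU hI₀ hScont).continuous, fun y hy i => ?_⟩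
  · obtain ⟨p, ⟨hp0, hp1⟩, hval⟩ := exists_inducedU_eq_dotProduct hI₀ hScont y
    exact ⟨p, hp0, hp1, hval⟩
  · linarith [inducedU_le_apply_add hI₀ hScont y i]
end

section
/- Let I ≥ 2 and let S : Θ_I → ℝ^I be continuous on the probability simplex Θ_I and suppose S is a proper scoring rule: pᵀS(p) ≥ pᵀS(r) for all p, r ∈ Θ_I. Define U(y) = min_{p ∈ Θ_I} pᵀ·( S(p) + y ). Then for every r ∈ Θ_I, the point −S(r) is a minimizer of rᵀy over { y ∈ ℝ^I : U(y) ≥ 0 }; that is, U(−S(r)) ≥ 0, and every y ∈ ℝ^I with U(y) ≥ 0 satisfies rᵀy ≥ −rᵀS(r). -/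
/-- Market equivalence — for a continuous proper scoring rule `S`,
the point `-S(r)` minimizes `rᵀy` over `{ y : U(y) ≥ 0 }`, where `U` is the
multivariate utility induced by `S`. -/
theorem stmt_16 (I : ℕ) (hI : 2 ≤ I) (S : (Fin I → ℝ) → (Fin I → ℝ))
    (hScont : ContinuousOn S {p : Fin I → ℝ | (∀ i, 0 ≤ p i) ∧ ∑ i, p i = 1})
    (hproper : ∀ p r : Fin I → ℝ, (∀ i, 0 ≤ p i) → ∑ i, p i = 1 →
      (∀ i, 0 ≤ r i) → ∑ i, r i = 1 → ∑ i, p i * S r i ≤ ∑ i, p i * S p i) :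
    ∀ r : Fin I → ℝ, (∀ i, 0 ≤ r i) → ∑ i, r i = 1 →
      0 ≤ inducedU I S (-S r) ∧
      ∀ y : Fin I → ℝ, 0 ≤ inducedU I S y →
        ∑ i, r i * (-S r i) ≤ ∑ i, r i * y i := by
  intro r hr0 hr1
  haveI : Nonempty (Fin I) := ⟨⟨0, by omega⟩⟩
  constructor
  · -- 0 ≤ U(-S r)
    apply le_csInf
    · exact ⟨∑ i, r i * (S r i + (-S r) i), r, hr0, hr1, rfl⟩
    · rintro v ⟨p, hp0, hp1, rfl⟩
      have h := hproper p r hp0 hp1 hr0 hr1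
      have : ∑ i, p i * (S p i + (-S r) i)
          = ∑ i, p i * S p i - ∑ i, p i * S r i := by
        rw [← Finset.sum_sub_distrib]
        apply Finset.sum_congr rfl
        intro i _
        simp [Pi.neg_apply]; ring
      rw [this]; linarith
  · intro y hUy
    set m : ℝ := Finset.univ.inf' Finset.univ_nonempty (fun i => S r i + y i) with hm
    have hbdd : BddBelow {v : ℝ | ∃ p : Fin I → ℝ, (∀ i, 0 ≤ p i) ∧ ∑ i, p i = 1 ∧
        v = ∑ i, p i * (S p i + y i)} := by
      refine ⟨m, ?_⟩
      rintro v ⟨p, hp0, hp1, rfl⟩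
      have h1 : ∑ i, p i * (S r i + y i) ≤ ∑ i, p i * (S p i + y i) := by
        have h := hproper p r hp0 hp1 hr0 hr1
        have e1 : ∑ i, p i * (S r i + y i) = ∑ i, p i * S r i + ∑ i, p i * y i := by
          rw [← Finset.sum_add_distrib]; apply Finset.sum_congr rfl; intros; ring
        have e2 : ∑ i, p i * (S p i + y i) = ∑ i, p i * S p i + ∑ i, p i * y i := by
          rw [← Finset.sum_add_distrib]; apply Finset.sum_congr rfl; intros; ring
        rw [e1, e2]; linarith
      have h2 : m ≤ ∑ i, p i * (S r i + y i) := by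
        calc m = ∑ i, p i * m := by
              rw [← Finset.sum_mul, hp1, one_mul]
          _ ≤ ∑ i, p i * (S r i + y i) := by
              apply Finset.sum_le_sum
              intro i _
              exact mul_le_mul_of_nonneg_left
                (Finset.inf'_le _ (Finset.mem_univ i)) (hp0 i)
      linarith
    have hle : inducedU I S y ≤ ∑ i, r i * (S r i + y i) :=
      csInf_le hbdd ⟨r, hr0, hr1, rfl⟩
    have e1 : ∑ i, r i * (S r i + y i) = ∑ i, r i * S r i + ∑ i, r i * y i := by
      rw [← Finset.sum_add_distrib]; apply Finset.sum_congr rfl; intros; ring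
    have e2 : ∑ i, r i * (-S r i) = -∑ i, r i * S r i := by
      rw [← Finset.sum_neg_distrib]; apply Finset.sum_congr rfl; intros; ring
    have := hUy.trans hle
    rw [e1] at this
    rw [e2]
    linarith
end

section
/- Let I ≥ 2, W₀ ∈ ℝ, and let U : ℝ^I → ℝ be continuous, concave and monotonically increasing. For q ∈ ℝ^I define C_U(q) = inf { W ∈ ℝ : U(W·e − q) ≥ U(W₀·e) }. Then: (i) for every q the infimum is finite and attained, and C_U(q) is the unique W with U(W·e − q) = U(W₀·e); (ii) C_U is translation invariant: C_U(q + t·e) = C_U(q) + t for all t ∈ ℝ; (iii) C_U is convex; (iv) C_U is monotonically increasing: if q ≥ q̂ componentwise then C_U(q) ≥ C_U(q̂), with strict inequality if additionally q ≠ q̂; and (v) C_U is continuous. Hence C_U is a valid cost function, and the multivariate-utility mechanism based on U charges exactly C_U(q_t + Δq) − C_U(q_t) for an order Δq when the outstanding securities are q_t. -/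
/-- The cost function induced by a multivariate utility `U`:
`C_U(q) = inf { W : U(W·e − q) ≥ U(W₀·e) }`. -/
noncomputable def costU (I : ℕ) (U : (Fin I → ℝ) → ℝ) (W0 : ℝ) (q : Fin I → ℝ) : ℝ :=
  sInf {W : ℝ | U (W0 • (1 : Fin I → ℝ)) ≤ U (W • (1 : Fin I → ℝ) - q)}

/-- The cost function induced by a continuous, concave, monotonically
increasing multivariate utility is well defined (attained and characterized by the
indifference equation), translation invariant, convex, monotone and continuous, and the
MU mechanism charges exactly the cost-function increments. -/
theorem stmt_17 (I : ℕ) (hI : 2 ≤ I) (W0 : ℝ)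
    (U : (Fin I → ℝ) → ℝ)
    (hUcont : Continuous U) (hUconc : ConcaveOn ℝ Set.univ U)
    (hUmono : ∀ x y : Fin I → ℝ, x ≤ y → U x ≤ U y)
    (hUstrict : ∀ x y : Fin I → ℝ, x ≤ y → x ≠ y → U x < U y) :
    -- (i) the infimum is finite and attained, and `C_U(q)` is the unique indifference point
    (∀ q : Fin I → ℝ,
      IsLeast {W : ℝ | U (W0 • (1 : Fin I → ℝ)) ≤ U (W • (1 : Fin I → ℝ) - q)}
        (costU I U W0 q)) ∧
    (∀ q : Fin I → ℝ,
      U ((costU I U W0 q) • (1 : Fin I → ℝ) - q) = U (W0 • (1 : Fin I → ℝ))) ∧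
    (∀ (q : Fin I → ℝ) (W : ℝ),
      U (W • (1 : Fin I → ℝ) - q) = U (W0 • (1 : Fin I → ℝ)) → W = costU I U W0 q) ∧
    -- (ii) translation invariance
    (∀ (q : Fin I → ℝ) (t : ℝ),
      costU I U W0 (q + t • (1 : Fin I → ℝ)) = costU I U W0 q + t) ∧
    -- (iii) convexity
    ConvexOn ℝ Set.univ (costU I U W0) ∧
    -- (iv) monotonicity
    (∀ q q' : Fin I → ℝ, q ≤ q' → costU I U W0 q ≤ costU I U W0 q') ∧
    (∀ q q' : Fin I → ℝ, q ≤ q' → q ≠ q' → costU I U W0 q < costU I U W0 q') ∧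
    -- (v) continuity
    Continuous (costU I U W0) ∧
    -- the MU mechanism charges exactly the cost-function increment
    (∀ (qt Δq : Fin I → ℝ) (Wt : ℝ),
      U (Wt • (1 : Fin I → ℝ) - qt) = U (W0 • (1 : Fin I → ℝ)) →
      IsLeast {Δw : ℝ |
          U (W0 • (1 : Fin I → ℝ)) ≤ U ((Wt + Δw) • (1 : Fin I → ℝ) - (qt + Δq))}
        (costU I U W0 (qt + Δq) - costU I U W0 qt)) := by
  haveI : Nonempty (Fin I) := ⟨⟨0, by omega⟩⟩
  -- strict monotonicity of W ↦ U (W•1 - q)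
  have hsm : ∀ q : Fin I → ℝ, StrictMono (fun W : ℝ => U (W • (1 : Fin I → ℝ) - q)) := by
    intro q W W' hWW'
    apply hUstrict
    · intro i
      simp only [Pi.sub_apply, Pi.smul_apply, Pi.one_apply, smul_eq_mul, mul_one]
      linarith
    · intro h
      have h0 := congrFun h ⟨0, by omega⟩
      simp only [Pi.sub_apply, Pi.smul_apply, Pi.one_apply, smul_eq_mul, mul_one] at h0
      linarith
  have hcontf : ∀ q : Fin I → ℝ, Continuous (fun W : ℝ => U (W • (1 : Fin I → ℝ) - q)) := by
    intro q
    exact hUcont.comp ((continuous_id.smul continuous_const).sub continuous_const)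
  -- existence of indifference point
  have hex : ∀ q : Fin I → ℝ, ∃ W : ℝ,
      U (W • (1 : Fin I → ℝ) - q) = U (W0 • (1 : Fin I → ℝ)) := by
    intro q
    have h1 : U ((W0 - ‖q‖) • (1 : Fin I → ℝ) - q) ≤ U (W0 • (1 : Fin I → ℝ)) := by
      apply hUmono
      intro i
      have := norm_le_pi_norm q i
      simp only [Pi.sub_apply, Pi.smul_apply, Pi.one_apply, smul_eq_mul, mul_one,
        Real.norm_eq_abs] at *
      have := neg_abs_le (q i)
      linarith
    have h2 : U (W0 • (1 : Fin I → ℝ)) ≤ U ((W0 + ‖q‖) • (1 : Fin I → ℝ) - q) := by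
      apply hUmono
      intro i
      have := norm_le_pi_norm q i
      simp only [Pi.sub_apply, Pi.smul_apply, Pi.one_apply, smul_eq_mul, mul_one,
        Real.norm_eq_abs] at *
      have := le_abs_self (q i)
      linarith
    have hab : (W0 - ‖q‖ : ℝ) ≤ W0 + ‖q‖ := by linarith [norm_nonneg q]
    obtain ⟨W, _, hW⟩ := intermediate_value_Icc hab ((hcontf q).continuousOn) ⟨h1, h2⟩
    exact ⟨W, hW⟩
  classical
  let Ws : (Fin I → ℝ) → ℝ := fun q => Classical.choose (hex q)
  have hWs : ∀ q : Fin I → ℝ,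
      U (Ws q • (1 : Fin I → ℝ) - q) = U (W0 • (1 : Fin I → ℝ)) :=
    fun q => Classical.choose_spec (hex q)
  have hset : ∀ q : Fin I → ℝ,
      {W : ℝ | U (W0 • (1 : Fin I → ℝ)) ≤ U (W • (1 : Fin I → ℝ) - q)} = Set.Ici (Ws q) := by
    intro q
    ext W
    simp only [Set.mem_setOf_eq, Set.mem_Ici]
    rw [← hWs q]
    exact (hsm q).le_iff_le
  have hcost : ∀ q : Fin I → ℝ, costU I U W0 q = Ws q := by
    intro q
    rw [costU, hset q, csInf_Ici]
  have hceq : ∀ q : Fin I → ℝ,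
      U ((costU I U W0 q) • (1 : Fin I → ℝ) - q) = U (W0 • (1 : Fin I → ℝ)) := by
    intro q; rw [hcost]; exact hWs q
  have huniq : ∀ (q : Fin I → ℝ) (W : ℝ),
      U (W • (1 : Fin I → ℝ) - q) = U (W0 • (1 : Fin I → ℝ)) → W = costU I U W0 q := by
    intro q W hW
    have := (hsm q).injective (a₁ := W) (a₂ := costU I U W0 q) (by rw [hW, hceq q])
    exact this
  have hle : ∀ (q : Fin I → ℝ) (W : ℝ),
      U (W0 • (1 : Fin I → ℝ)) ≤ U (W • (1 : Fin I → ℝ) - q) → costU I U W0 q ≤ W := by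
    intro q W hW
    have : W ∈ Set.Ici (Ws q) := by rw [← hset q]; exact hW
    rw [hcost]; exact this
  have hmono : ∀ q q' : Fin I → ℝ, q ≤ q' → costU I U W0 q ≤ costU I U W0 q' := by
    intro q q' hqq'
    apply hle
    rw [← hceq q']
    apply hUmono
    intro i
    simp only [Pi.sub_apply]
    exact sub_le_sub_left (hqq' i) _
  have hmonos : ∀ q q' : Fin I → ℝ, q ≤ q' → q ≠ q' →
      costU I U W0 q < costU I U W0 q' := by
    intro q q' hqq' hne
    have h1 : U ((costU I U W0 q) • (1 : Fin I → ℝ) - q)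
        < U ((costU I U W0 q') • (1 : Fin I → ℝ) - q) := by
      rw [hceq q, ← hceq q']
      apply hUstrict
      · intro i
        simp only [Pi.sub_apply]
        exact sub_le_sub_left (hqq' i) _
      · intro h
        apply hne
        funext i
        have := congrFun h i
        simp only [Pi.sub_apply] at this
        linarith
    exact (hsm q).lt_iff_lt.mp h1
  refine ⟨?_, hceq, huniq, ?_, ?_, hmono, hmonos, ?_, ?_⟩
  · intro q
    constructor
    · exact hceq q ▸ le_of_eq (hceq q).symm
    · intro W hW
      exact hle q W hW
  · -- translation invariance
    intro q t
    symm
    apply huniq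
    have : (costU I U W0 q + t) • (1 : Fin I → ℝ) - (q + t • (1 : Fin I → ℝ))
        = (costU I U W0 q) • (1 : Fin I → ℝ) - q := by
      funext i
      simp only [Pi.sub_apply, Pi.add_apply, Pi.smul_apply, Pi.one_apply, smul_eq_mul, mul_one]
      ring
    rw [this]
    exact hceq q
  · -- convexity
    refine ⟨convex_univ, ?_⟩
    intro x _ y _ a b ha hb hab
    apply hle
    have hvec : (a * costU I U W0 x + b * costU I U W0 y) • (1 : Fin I → ℝ)
        - (a • x + b • y)
        = a • ((costU I U W0 x) • (1 : Fin I → ℝ) - x)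
          + b • ((costU I U W0 y) • (1 : Fin I → ℝ) - y) := by
      funext i
      simp only [Pi.sub_apply, Pi.add_apply, Pi.smul_apply, Pi.one_apply, smul_eq_mul, mul_one]
      ring
    have hsmul : (a * costU I U W0 x + b * costU I U W0 y)
        = a • costU I U W0 x + b • costU I U W0 y := by
      simp [smul_eq_mul]
    rw [smul_eq_mul] at *
    calc U (W0 • (1 : Fin I → ℝ))
        = a * U (W0 • (1 : Fin I → ℝ)) + b * U (W0 • (1 : Fin I → ℝ)) := by rw [← one_mul (U (W0 • (1 : Fin I → ℝ)))]; nth_rewrite 1 [← hab]; ring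
      _ = a * U ((costU I U W0 x) • (1 : Fin I → ℝ) - x)
            + b * U ((costU I U W0 y) • (1 : Fin I → ℝ) - y) := by rw [hceq x, hceq y]
      _ ≤ U (a • ((costU I U W0 x) • (1 : Fin I → ℝ) - x)
            + b • ((costU I U W0 y) • (1 : Fin I → ℝ) - y)) := by
          have := hUconc.2 (Set.mem_univ ((costU I U W0 x) • (1 : Fin I → ℝ) - x))
            (Set.mem_univ ((costU I U W0 y) • (1 : Fin I → ℝ) - y)) ha hb hab
          simpa [smul_eq_mul] using this
      _ = U ((a * costU I U W0 x + b * costU I U W0 y) • (1 : Fin I → ℝ)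
            - (a • x + b • y)) := by rw [hvec]
  · -- continuity via Lipschitz
    have hlip : LipschitzWith 1 (costU I U W0) := by
      apply LipschitzWith.of_dist_le_mul
      intro q q'
      rw [Real.dist_eq, NNReal.coe_one, one_mul, abs_sub_le_iff]
      have key : ∀ p p' : Fin I → ℝ, costU I U W0 p - costU I U W0 p' ≤ dist p p' := by
        intro p p'
        have h1 : p ≤ p' + (dist p p') • (1 : Fin I → ℝ) := by
          intro i
          simp only [Pi.add_apply, Pi.smul_apply, Pi.one_apply, smul_eq_mul, mul_one]
          have h2 : |p i - p' i| ≤ dist p p' := by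
            rw [dist_eq_norm]
            have := norm_le_pi_norm (p - p') i
            simpa [Real.norm_eq_abs] using this
          have := le_abs_self (p i - p' i)
          linarith
        have h3 := hmono p (p' + (dist p p') • (1 : Fin I → ℝ)) h1
        have h4 : costU I U W0 (p' + (dist p p') • (1 : Fin I → ℝ))
            = costU I U W0 p' + dist p p' := by
          symm
          apply huniq
          have heq : (costU I U W0 p' + dist p p') • (1 : Fin I → ℝ)
              - (p' + (dist p p') • (1 : Fin I → ℝ))
              = (costU I U W0 p') • (1 : Fin I → ℝ) - p' := by
            funext i
            simp only [Pi.sub_apply, Pi.add_apply, Pi.smul_apply, Pi.one_apply,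
              smul_eq_mul, mul_one]
            ring
          rw [heq]
          exact hceq p'
        linarith
      exact ⟨key q q', by rw [dist_comm] at *; linarith [key q' q]⟩
    exact hlip.continuous
  · -- MU mechanism
    intro qt Δq Wt hWt
    have hWteq : Wt = costU I U W0 qt := huniq qt Wt hWt
    constructor
    · show U (W0 • (1 : Fin I → ℝ))
        ≤ U ((Wt + (costU I U W0 (qt + Δq) - costU I U W0 qt)) • (1 : Fin I → ℝ)
          - (qt + Δq))
      have : Wt + (costU I U W0 (qt + Δq) - costU I U W0 qt) = costU I U W0 (qt + Δq) := by
        rw [hWteq]; ring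
      rw [this]
      exact le_of_eq (hceq (qt + Δq)).symm
    · intro Δw hΔw
      simp only [Set.mem_setOf_eq] at hΔw
      have := hle (qt + Δq) (Wt + Δw) hΔw
      rw [hWteq] at this
      linarith
end

section
/- Let I ≥ 2, J ≥ 1, γ < 1 with γ ≠ 0, let (θ_1,…,θ_I) and (π_{1,j},…,π_{I,j}) for j = 1,…,J be probability vectors with strictly positive entries, let ŵ_1,…,ŵ_J > 0 and Ŵ₀ > 0, and set s_i = Σ_{j=1}^J π_{i,j}^{1/(1−γ)}·ŵ_j and S = Σ_{j=1}^J ŵ_j. Suppose the belief-matching condition ( s_i / S )^{1−γ} = θ_i holds for every i. Then ξ = Ŵ₀^{1−γ} solves the equation Σ_{i=1}^I θ_i·( Ŵ₀ + ( −Ŵ₀·s_i + (ξ·θ_i)^{1/(1−γ)}·S ) / ( (ξ·θ_i)^{1/(1−γ)} + s_i ) )^γ = Ŵ₀^γ, and consequently the quantities h_i(ξ) = ( ( (ξ θ_i)^{1/(1−γ)} + s_i ) / ( Ŵ₀ + S ) )^{1−γ}, normalized, give the approximate limiting price p*_i = ( Ŵ₀·θ_i^{1/(1−γ)} + Σ_{j=1}^J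 ŵ_j·π_{i,j}^{1/(1−γ)} )^{1−γ} / Σ_{k=1}^I ( Ŵ₀·θ_k^{1/(1−γ)} + Σ_{j=1}^J ŵ_j·π_{k,j}^{1/(1−γ)} )^{1−γ}. -/
/-!
Write `e = 1 - γ` and `xᵢ = sᵢ / S`. Belief matching says `θᵢ = xᵢ ^ e`, so
`θᵢ ^ (1/e) = xᵢ` and, for `ξ = Ŵ₀ ^ e`, `(ξ θᵢ) ^ (1/e) = Ŵ₀ xᵢ`. Since `Ŵ₀ xᵢ S = Ŵ₀ sᵢ`,
every term of the binding constraint collapses to `θᵢ Ŵ₀ ^ γ`, and `∑ θᵢ = 1`. For the price,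
`hᵢ(ξ)` has base `xᵢ` while the price formula has base `xᵢ (Ŵ₀ + S)`; the common positive
factor cancels on normalizing.
-/

open Finset

namespace Real

lemma rpow_one_div_of_eq_rpow {x y e : ℝ} (hx : 0 ≤ x) (he : e ≠ 0) (h : y = x ^ e) :
    y ^ (1 / e) = x := by
  rw [h, one_div, rpow_rpow_inv hx he]

lemma mul_rpow_one_div_of_eq_rpow {c x y e : ℝ} (hc : 0 ≤ c) (hx : 0 ≤ x) (he : e ≠ 0)
    (h : y = x ^ e) : (c ^ e * y) ^ (1 / e) = c * x :=
  rpow_one_div_of_eq_rpow (mul_nonneg hc hx) he (by rw [h, mul_rpow hc hx])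

lemma rpow_mul_right_div_sum {ι : Type*} [Fintype ι] {x : ι → ℝ} (hx : ∀ k, 0 ≤ x k)
    {c : ℝ} (hc : 0 < c) (e : ℝ) (i : ι) :
    (x i * c) ^ e / ∑ k, (x k * c) ^ e = x i ^ e / ∑ k, x k ^ e := by
  have hmul : ∀ k, (x k * c) ^ e = x k ^ e * c ^ e := fun k => mul_rpow (hx k) hc.le
  simp only [hmul]
  rw [← sum_mul, mul_div_mul_right _ _ (rpow_pos_of_pos hc e).ne']

end Real

theorem stmt_18_general (I J : ℕ) (hJ : 1 ≤ J)
    (γ : ℝ) (hγ1 : γ < 1)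
    (θ : Fin I → ℝ) (hθs : ∑ i, θ i = 1)
    (π : Fin J → Fin I → ℝ) (hπ : ∀ j i, 0 < π j i)
    (w : Fin J → ℝ) (hw : ∀ j, 0 < w j) (W0 : ℝ) (hW0 : 0 < W0)
    -- the belief-matching condition
    (hmatch : ∀ i,
      ((∑ j, π j i ^ (1 / (1 - γ)) * w j) / ∑ j, w j) ^ (1 - γ) = θ i) :
    let ξ : ℝ := W0 ^ (1 - γ)
    let s : Fin I → ℝ := fun i => ∑ j, π j i ^ (1 / (1 - γ)) * w j
    let Ssum : ℝ := ∑ j, w j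
    -- `ξ = Ŵ₀^{1-γ}` solves the binding-constraint equation
    (∑ i, θ i * (W0 + (-(W0 * s i) + (ξ * θ i) ^ (1 / (1 - γ)) * Ssum) /
        ((ξ * θ i) ^ (1 / (1 - γ)) + s i)) ^ γ = W0 ^ γ) ∧
    -- the normalized `hᵢ(ξ)` give the approximate limiting price
    (∀ i, (((ξ * θ i) ^ (1 / (1 - γ)) + s i) / (W0 + Ssum)) ^ (1 - γ) /
        (∑ k, (((ξ * θ k) ^ (1 / (1 - γ)) + s k) / (W0 + Ssum)) ^ (1 - γ)) =
      (W0 * θ i ^ (1 / (1 - γ)) + ∑ j, w j * π j i ^ (1 / (1 - γ))) ^ (1 - γ) /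
        ∑ k, (W0 * θ k ^ (1 / (1 - γ)) + ∑ j, w j * π j k ^ (1 / (1 - γ))) ^ (1 - γ)) := by
  intro ξ s Ssum
  have he : 1 - γ ≠ 0 := by linarith
  have hS : 0 < Ssum := sum_pos (fun j _ => hw j) (univ_nonempty_iff.mpr ⟨⟨0, hJ⟩⟩)
  have hx : ∀ i, 0 ≤ s i / Ssum := fun i => div_nonneg
    (sum_nonneg fun j _ => mul_nonneg (Real.rpow_nonneg (hπ j i).le _) (hw j).le) hS.le
  have hθx : ∀ i, θ i ^ (1 / (1 - γ)) = s i / Ssum := fun i =>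
    Real.rpow_one_div_of_eq_rpow (hx i) he (hmatch i).symm
  have hξθ : ∀ i, (ξ * θ i) ^ (1 / (1 - γ)) = W0 * (s i / Ssum) := fun i =>
    Real.mul_rpow_one_div_of_eq_rpow hW0.le (hx i) he (hmatch i).symm
  constructor
  · have hconstraint : ∀ i, W0 + (-(W0 * s i) + (ξ * θ i) ^ (1 / (1 - γ)) * Ssum) /
        ((ξ * θ i) ^ (1 / (1 - γ)) + s i) = W0 := fun i => by
      rw [hξθ, mul_assoc, div_mul_cancel₀ _ hS.ne', neg_add_cancel, zero_div, add_zero]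
    simp only [hconstraint, ← sum_mul, hθs, one_mul]
  · intro i
    have hbase : ∀ k, ((ξ * θ k) ^ (1 / (1 - γ)) + s k) / (W0 + Ssum) = s k / Ssum := fun k => by
      rw [hξθ]
      field_simp
    have hprice : ∀ k, W0 * θ k ^ (1 / (1 - γ)) + ∑ j, w j * π j k ^ (1 / (1 - γ)) =
        s k / Ssum * (W0 + Ssum) := fun k => by
      simp only [hθx, s, mul_comm (w _)]
      field_simp
    simp only [hbase, hprice]
    exact (Real.rpow_mul_right_div_sum hx (by positivity) _ i).symm

/-- Verification of the approximate limiting price formula for HARA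
markets: under the belief-matching condition, `ξ = Ŵ₀^{1-γ}` solves the binding
constraint equation, and the normalized quantities `hᵢ(ξ)` give the weighted power
mean price formula. -/
theorem stmt_18 (I J : ℕ) (hI : 2 ≤ I) (hJ : 1 ≤ J)
    (γ : ℝ) (hγ1 : γ < 1) (hγ0 : γ ≠ 0)
    (θ : Fin I → ℝ) (hθ : ∀ i, 0 < θ i) (hθs : ∑ i, θ i = 1)
    (π : Fin J → Fin I → ℝ) (hπ : ∀ j i, 0 < π j i) (hπs : ∀ j, ∑ i, π j i = 1)
    (w : Fin J → ℝ) (hw : ∀ j, 0 < w j) (W0 : ℝ) (hW0 : 0 < W0)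
    -- the belief-matching condition
    (hmatch : ∀ i,
      ((∑ j, π j i ^ (1 / (1 - γ)) * w j) / ∑ j, w j) ^ (1 - γ) = θ i) :
    let ξ : ℝ := W0 ^ (1 - γ)
    let s : Fin I → ℝ := fun i => ∑ j, π j i ^ (1 / (1 - γ)) * w j
    let Ssum : ℝ := ∑ j, w j
    -- `ξ = Ŵ₀^{1-γ}` solves the binding-constraint equation
    (∑ i, θ i * (W0 + (-(W0 * s i) + (ξ * θ i) ^ (1 / (1 - γ)) * Ssum) /
        ((ξ * θ i) ^ (1 / (1 - γ)) + s i)) ^ γ = W0 ^ γ) ∧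
    -- the normalized `hᵢ(ξ)` give the approximate limiting price
    (∀ i, (((ξ * θ i) ^ (1 / (1 - γ)) + s i) / (W0 + Ssum)) ^ (1 - γ) /
        (∑ k, (((ξ * θ k) ^ (1 / (1 - γ)) + s k) / (W0 + Ssum)) ^ (1 - γ)) =
      (W0 * θ i ^ (1 / (1 - γ)) + ∑ j, w j * π j i ^ (1 / (1 - γ))) ^ (1 - γ) /
        ∑ k, (W0 * θ k ^ (1 / (1 - γ)) + ∑ j, w j * π j k ^ (1 / (1 - γ))) ^ (1 - γ)) :=
  stmt_18_general I J hJ γ hγ1 θ hθs π hπ w hw W0 hW0 hmatch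
end
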